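/- arXiv:2302.03066 — 7 statements merged into one kernel-verified Lean document; each statement's English description precedes it below -/
import Mathlib

section
/- Let α₁,…,α_m ∈ W, let C ⊆ X be a convex cone, let i₀ ∈ {1,…,m}, let T ⊆ Y, and define D_i := {x ∈ C : ⟨α_i,x⟩ ≤ 0} for each i. Consider the programs (P̂): supremize ξ over pairs (x,ξ) with x ∈ C, ⟨y,Ax⟩ ≥ ξ for all y ∈ T, ⟨α_i,x⟩ = 1 for all i ∈ {1,…,m}, and ξ > 0; and (P̂_{i₀}): infimize ⟨α_{i₀},x'⟩ over x' ∈ C ∖ (⋂_{i=1}^m D_i) with ⟨y,Ax'⟩ ≥ 1 for all y ∈ T and ⟨α_i,x'⟩ = ⟨α_j,x'⟩ for all i ≠ j. Then (P̂) is feasible if and only if (P̂_{i₀}) is feasible; moreover, if (P̂) is feasible and val(P̂) < +∞, then val(P̂_{i₀}) = 1/val(P̂). -/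
/-- Lemma 3.2: equivalence of the programs (P̂) and (P̂_{i₀}):
(P̂) is feasible iff (P̂_{i₀}) is feasible; moreover if (P̂) is feasible with
val(P̂) < +∞ then val(P̂_{i₀}) = 1 / val(P̂). -/
theorem stmt1
    {X W Z Y : Type*} [AddCommGroup X] [Module ℝ X] [AddCommGroup W] [Module ℝ W]
    [AddCommGroup Z] [Module ℝ Z] [AddCommGroup Y] [Module ℝ Y]
    -- separating bilinear pairings of the dual pairs (X,W) and (Z,Y)
    (p : W →ₗ[ℝ] X →ₗ[ℝ] ℝ) (q : Y →ₗ[ℝ] Z →ₗ[ℝ] ℝ)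
    (hp₁ : ∀ w : W, (∀ x : X, p w x = 0) → w = 0)
    (hp₂ : ∀ x : X, (∀ w : W, p w x = 0) → x = 0)
    (hq₁ : ∀ y : Y, (∀ z : Z, q y z = 0) → y = 0)
    (hq₂ : ∀ z : Z, (∀ y : Y, q y z = 0) → z = 0)
    -- linear operator A with well-defined adjoint
    (A : X →ₗ[ℝ] Z) (Astar : Y →ₗ[ℝ] W)
    (hadj : ∀ (y : Y) (x : X), p (Astar y) x = q y (A x))
    -- data: α₁,…,α_m ∈ W, i₀, a convex cone C ⊆ X, and T ⊆ Y
    (m : ℕ) (α : Fin m → W) (i₀ : Fin m)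
    (C : Set X) (hCcone : ∀ (r : ℝ), 0 ≤ r → ∀ x ∈ C, r • x ∈ C) (hCconv : Convex ℝ C)
    (T : Set Y)
    -- feasible set of (P̂): pairs (x,ξ), x ∈ C, ⟨y,Ax⟩ ≥ ξ ∀y∈T, ⟨α_i,x⟩ = 1 ∀i, ξ > 0
    (FeasHat : Set (X × ℝ))
    (hFeasHat : FeasHat = {xξ : X × ℝ | xξ.1 ∈ C ∧ (∀ y ∈ T, xξ.2 ≤ q y (A xξ.1)) ∧
      (∀ i, p (α i) xξ.1 = 1) ∧ 0 < xξ.2})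
    -- feasible set of (P̂_{i₀}): x' ∈ C ∖ ⋂ᵢ Dᵢ (Dᵢ = {x ∈ C : ⟨α_i,x⟩ ≤ 0}),
    -- ⟨y,Ax'⟩ ≥ 1 ∀y∈T, ⟨α_i,x'⟩ = ⟨α_j,x'⟩ ∀ i ≠ j
    (FeasI0 : Set X)
    (hFeasI0 : FeasI0 = {x' | (x' ∈ C \ ⋂ i, {x ∈ C | p (α i) x ≤ 0}) ∧
      (∀ y ∈ T, 1 ≤ q y (A x')) ∧ (∀ i j, i ≠ j → p (α i) x' = p (α j) x')}) :
    (FeasHat.Nonempty ↔ FeasI0.Nonempty) ∧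
    (FeasHat.Nonempty → BddAbove (Prod.snd '' FeasHat) →
      sInf ((fun x' => p (α i₀) x') '' FeasI0) = 1 / sSup (Prod.snd '' FeasHat)) := by

  classical
  -- forward map: from FeasHat to FeasI0
  have fwd : ∀ x : X, ∀ ξ : ℝ, (x, ξ) ∈ FeasHat →
      ξ⁻¹ • x ∈ FeasI0 ∧ p (α i₀) (ξ⁻¹ • x) = ξ⁻¹ := by
    intro x ξ h
    rw [hFeasHat] at h
    obtain ⟨hxC, hT, hα, hξ⟩ := h
    have hξi : 0 < ξ⁻¹ := inv_pos.2 hξ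
    have hval : ∀ i, p (α i) (ξ⁻¹ • x) = ξ⁻¹ := by
      intro i
      simp [map_smul, smul_eq_mul, hα i]
    refine ⟨?_, hval i₀⟩
    rw [hFeasI0]
    refine ⟨⟨hCcone ξ⁻¹ hξi.le x hxC, ?_⟩, ?_, ?_⟩
    · intro hmem
      simp only [Set.mem_iInter, Set.mem_setOf_eq] at hmem
      have := (hmem i₀).2
      rw [hval i₀] at this
      exact absurd this (not_le.2 hξi)
    · intro y hy
      have h1 : ξ⁻¹ * ξ ≤ ξ⁻¹ * q y (A x) :=
        mul_le_mul_of_nonneg_left (hT y hy) hξi.le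
      rw [inv_mul_cancel₀ hξ.ne'] at h1
      simpa [map_smul, smul_eq_mul] using h1
    · intro i j _
      rw [hval i, hval j]
  -- backward map: from FeasI0 to FeasHat
  have bwd : ∀ x' ∈ FeasI0, 0 < p (α i₀) x' ∧
      ((p (α i₀) x')⁻¹ • x', (p (α i₀) x')⁻¹) ∈ FeasHat := by
    intro x' h
    rw [hFeasI0] at h
    obtain ⟨⟨hxC, hnot⟩, hT, heq⟩ := h
    simp only [Set.mem_iInter, Set.mem_setOf_eq, not_forall] at hnot
    obtain ⟨i, hi⟩ := hnot
    have hipos : 0 < p (α i) x' := by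
      by_contra hle
      exact hi ⟨hxC, le_of_not_gt hle⟩
    have hall : ∀ j, p (α j) x' = p (α i) x' := by
      intro j
      by_cases hji : j = i
      · rw [hji]
      · exact heq j i hji
    have ht : 0 < p (α i₀) x' := by rw [hall i₀]; exact hipos
    set t := p (α i₀) x' with htdef
    have hti : 0 < t⁻¹ := inv_pos.2 ht
    refine ⟨ht, ?_⟩
    rw [hFeasHat]
    refine ⟨hCcone t⁻¹ hti.le x' hxC, ?_, ?_, hti⟩
    · intro y hy
      have h1 : t⁻¹ * 1 ≤ t⁻¹ * q y (A x') :=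
        mul_le_mul_of_nonneg_left (hT y hy) hti.le
      rw [mul_one] at h1
      simpa [map_smul, smul_eq_mul] using h1
    · intro j
      have : p (α j) x' = t := by rw [hall j, ← hall i₀]
      simp [map_smul, smul_eq_mul, this, inv_mul_cancel₀ ht.ne']
  have hiff : FeasHat.Nonempty ↔ FeasI0.Nonempty := by
    constructor
    · rintro ⟨⟨x, ξ⟩, h⟩
      exact ⟨_, (fwd x ξ h).1⟩
    · rintro ⟨x', h⟩
      exact ⟨_, (bwd x' h).2⟩
  refine ⟨hiff, ?_⟩
  intro hne hbdd
  set S := Prod.snd '' FeasHat with hSdef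
  set V := (fun x' => p (α i₀) x') '' FeasI0 with hVdef
  have hSpos : ∀ s ∈ S, 0 < s := by
    rintro s ⟨⟨x, ξ⟩, h, rfl⟩
    rw [hFeasHat] at h
    exact h.2.2.2
  have hSne : S.Nonempty := hne.image _
  have hVne : V.Nonempty := (hiff.1 hne).image _
  have hVpos : ∀ v ∈ V, 0 < v := by
    rintro v ⟨x', h, rfl⟩
    exact (bwd x' h).1
  have hVS : ∀ v ∈ V, v⁻¹ ∈ S := by
    rintro v ⟨x', h, rfl⟩
    exact ⟨_, (bwd x' h).2, rfl⟩
  have hSV : ∀ s ∈ S, s⁻¹ ∈ V := by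
    rintro s ⟨⟨x, ξ⟩, h, rfl⟩
    exact ⟨_, (fwd x ξ h).1, (fwd x ξ h).2⟩
  have hVbdd : BddBelow V := ⟨0, fun v hv => (hVpos v hv).le⟩
  have hM : 0 < sSup S := by
    obtain ⟨s, hs⟩ := hSne
    exact lt_of_lt_of_le (hSpos s hs) (le_csSup hbdd hs)
  rw [one_div]
  refine le_antisymm ?_ ?_
  · by_contra h
    push_neg at h
    have hI : 0 < sInf V := lt_trans (inv_pos.2 hM) h
    have hb : ∀ s ∈ S, s ≤ (sInf V)⁻¹ := by
      intro s hs
      have h1 : sInf V ≤ s⁻¹ := csInf_le hVbdd (hSV s hs)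
      have hs0 : 0 < s := hSpos s hs
      calc s = (s⁻¹)⁻¹ := (inv_inv s).symm
        _ ≤ (sInf V)⁻¹ := by
            apply inv_anti₀ hI h1
    have h2 : sSup S ≤ (sInf V)⁻¹ := csSup_le hSne hb
    have h3 : (sInf V)⁻¹ < ((sSup S)⁻¹)⁻¹ := by
      apply inv_strictAnti₀ (inv_pos.2 hM) h
    rw [inv_inv] at h3
    exact absurd (lt_of_le_of_lt h2 h3) (lt_irrefl _)
  · refine le_csInf hVne ?_
    intro v hv
    have h1 : v⁻¹ ≤ sSup S := le_csSup hbdd (hVS v hv)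
    have hv0 : 0 < v := hVpos v hv
    calc (sSup S)⁻¹ ≤ (v⁻¹)⁻¹ := inv_anti₀ (inv_pos.2 hv0) h1
      _ = v := inv_inv v
end

section
/- Let X be a real reflexive Banach space and let C ⊆ X be a closed convex cone. If the positive dual cone C* has nonempty interior, then int C* = C^{*s}, where C^{*s} := {w ∈ X* : ⟨w,x⟩ > 0 for all x ∈ C ∖ {0}} is the cone of strictly positive functionals on C. -/
/-!
An interior point `w` of `C*` is exactly a functional that is uniformly positive on `C`:
`δ ‖x‖ ≤ w x` on `C` for some `δ > 0`. Such a `w₀`, with constant `δ₀`, exists by hypothesis,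
so the slice `K = C ∩ {w₀ = 1}` is a bounded closed convex base of `C`. In a reflexive space `K`
is weakly compact (Banach–Alaoglu in the bidual), hence a strictly positive `w` attains a positive
minimum `m` on `K`, and rescaling gives `w x ≥ m w₀ x ≥ m δ₀ ‖x‖` on `C`.
-/

open NormedSpace Metric Set

section

variable {X : Type*} [NormedAddCommGroup X] [NormedSpace ℝ X]

theorem mem_interior_setOf_forall_nonneg_iff (C : Set X) (w : X →L[ℝ] ℝ) :
    w ∈ interior {w : X →L[ℝ] ℝ | ∀ x ∈ C, 0 ≤ w x} ↔ ∃ δ > 0, ∀ x ∈ C, δ * ‖x‖ ≤ w x := by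
  rw [mem_interior_iff_mem_nhds, nhds_basis_closedBall.mem_iff]
  constructor
  · rintro ⟨δ, hδ, hball⟩
    refine ⟨δ, hδ, fun x hx => ?_⟩
    obtain ⟨g, hg, hgx⟩ := exists_dual_vector'' ℝ x
    have hmem : w - δ • g ∈ closedBall w δ := by
      rw [mem_closedBall, dist_eq_norm, sub_sub_cancel_left, norm_neg, norm_smul,
        Real.norm_of_nonneg hδ.le]
      exact mul_le_of_le_one_right hδ.le hg
    have := hball hmem x hx
    simp only [sub_apply, smul_apply, hgx, smul_eq_mul, RCLike.ofReal_real_eq_id, id] at this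
    linarith
  · rintro ⟨δ, hδ, h⟩
    refine ⟨δ, hδ, fun u hu x hx => ?_⟩
    have hux : |u x - w x| ≤ δ * ‖x‖ :=
      calc |u x - w x| = ‖(u - w) x‖ := rfl
        _ ≤ ‖u - w‖ * ‖x‖ := (u - w).le_opNorm x
        _ ≤ δ * ‖x‖ := by gcongr; rwa [← dist_eq_norm, ← mem_closedBall]
    linarith [h x hx, (abs_le.1 hux).1]

theorem isCompact_toWeakSpace_image_of_surjective_inclusionInDoubleDual
    (hX : Function.Surjective (inclusionInDoubleDual ℝ X)) {K : Set X}
    (hKconv : Convex ℝ K) (hKclosed : IsClosed K) (hKbdd : Bornology.IsBounded K) :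
    IsCompact (toWeakSpace ℝ X '' K) := by
  have hrange : range (inclusionInDoubleDualWeak ℝ X) = univ := by
    refine eq_univ_of_forall fun Φ => ?_
    obtain ⟨x, hx⟩ := hX (WeakDual.toStrongDual Φ)
    exact ⟨toWeakSpace ℝ X x, congrArg StrongDual.toWeakDual hx⟩
  have hcpt := isCompact_closure_of_isBounded ℝ X (toWeakSpace ℝ X '' K)
    (by rwa [(toWeakSpace ℝ X).injective.preimage_image]) (hrange ▸ subset_univ _)
  rwa [← hKconv.toWeakSpace_closure ℝ, hKclosed.closure_eq] at hcpt

theorem exists_isMinOn_of_surjective_inclusionInDoubleDual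
    (hX : Function.Surjective (inclusionInDoubleDual ℝ X)) {K : Set X} (hKne : K.Nonempty)
    (hKconv : Convex ℝ K) (hKclosed : IsClosed K) (hKbdd : Bornology.IsBounded K)
    (f : X →L[ℝ] ℝ) : ∃ x ∈ K, IsMinOn f K x := by
  have hf : Continuous fun y : WeakSpace ℝ X => f y :=
    WeakBilin.eval_continuous (topDualPairing ℝ X).flip f
  obtain ⟨_, ⟨x, hx, rfl⟩, hmin⟩ :=
    (isCompact_toWeakSpace_image_of_surjective_inclusionInDoubleDual hX hKconv hKclosed
      hKbdd).exists_isMinOn (hKne.image _) hf.continuousOn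
  exact ⟨x, hx, fun y hy => hmin (mem_image_of_mem _ hy)⟩

section Cone

variable {C : Set X} {w₀ : X →L[ℝ] ℝ} {δ₀ : ℝ}

theorem isBounded_inter_preimage_one (hδ₀ : 0 < δ₀) (hw₀ : ∀ x ∈ C, δ₀ * ‖x‖ ≤ w₀ x) :
    Bornology.IsBounded (C ∩ w₀ ⁻¹' {1}) := by
  refine (isBounded_closedBall (x := 0) (r := δ₀⁻¹)).subset fun y ⟨hyC, hy1⟩ => ?_
  rw [mem_closedBall_zero_iff, ← one_div, le_div_iff₀' hδ₀]
  exact (hw₀ y hyC).trans_eq hy1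

theorem exists_forall_mul_norm_le_of_forall_pos
    (hX : Function.Surjective (inclusionInDoubleDual ℝ X))
    (hCcone : ∀ r : ℝ, 0 ≤ r → ∀ x ∈ C, r • x ∈ C) (hCconv : Convex ℝ C) (hCclosed : IsClosed C)
    (hδ₀ : 0 < δ₀) (hw₀ : ∀ x ∈ C, δ₀ * ‖x‖ ≤ w₀ x) {w : X →L[ℝ] ℝ}
    (hw : ∀ x ∈ C, x ≠ 0 → 0 < w x) : ∃ δ > 0, ∀ x ∈ C, δ * ‖x‖ ≤ w x := by
  set K := C ∩ w₀ ⁻¹' {1}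
  have hw₀pos : ∀ x ∈ C, x ≠ 0 → 0 < w₀ x := fun x hx hx0 =>
    (mul_pos hδ₀ (norm_pos_iff.2 hx0)).trans_le (hw₀ x hx)
  have hbase : ∀ x ∈ C, x ≠ 0 → (w₀ x)⁻¹ • x ∈ K := fun x hx hx0 =>
    ⟨hCcone _ (inv_nonneg.2 (hw₀pos x hx hx0).le) x hx, by
      simp [inv_mul_cancel₀ (hw₀pos x hx hx0).ne']⟩
  rcases K.eq_empty_or_nonempty with hK | hKne
  · refine ⟨1, one_pos, fun x hx => ?_⟩
    obtain rfl : x = 0 := by_contra fun hx0 => hK.subset (hbase x hx hx0)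
    simp
  obtain ⟨x₀, hx₀, hmin⟩ := exists_isMinOn_of_surjective_inclusionInDoubleDual hX hKne
    (hCconv.inter (convex_hyperplane w₀.isLinear 1))
    (hCclosed.inter (isClosed_singleton.preimage w₀.continuous))
    (isBounded_inter_preimage_one hδ₀ hw₀) w
  have hx₀ne : x₀ ≠ 0 := by rintro rfl; simpa using hx₀.2
  refine ⟨w x₀ * δ₀, mul_pos (hw x₀ hx₀.1 hx₀ne) hδ₀, fun x hx => ?_⟩
  rcases eq_or_ne x 0 with rfl | hx0
  · simp
  have hle : w x₀ ≤ (w₀ x)⁻¹ * w x := by simpa using hmin (hbase x hx hx0)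
  calc w x₀ * δ₀ * ‖x‖ = w x₀ * (δ₀ * ‖x‖) := mul_assoc _ _ _
    _ ≤ w x₀ * w₀ x := by gcongr; exacts [(hw x₀ hx₀.1 hx₀ne).le, hw₀ x hx]
    _ ≤ w x := by rwa [← le_div_iff₀ (hw₀pos x hx hx0), div_eq_inv_mul]

end Cone

end

theorem stmt5_general
    {X : Type*} [NormedAddCommGroup X] [NormedSpace ℝ X]
    -- reflexivity of X
    (hXrefl : Function.Surjective (NormedSpace.inclusionInDoubleDual ℝ X))
    -- closed convex cone C
    (C : Set X)
    (hCcone : ∀ (r : ℝ), 0 ≤ r → ∀ x ∈ C, r • x ∈ C) (hCconv : Convex ℝ C)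
    (hCclosed : IsClosed C)
    -- positive dual cone and strictly positive dual cone
    (Cstar : Set (X →L[ℝ] ℝ)) (hCstar : Cstar = {w : X →L[ℝ] ℝ | ∀ x ∈ C, 0 ≤ w x})
    (Cstrict : Set (X →L[ℝ] ℝ))
    (hCstrict : Cstrict = {w : X →L[ℝ] ℝ | ∀ x ∈ C, x ≠ 0 → 0 < w x})
    (hint : (interior Cstar).Nonempty) :
    interior Cstar = Cstrict := by
  subst hCstar hCstrict
  obtain ⟨w₀, hw₀⟩ := hint
  obtain ⟨δ₀, hδ₀, hw₀⟩ := (mem_interior_setOf_forall_nonneg_iff C w₀).1 hw₀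
  ext w
  rw [mem_interior_setOf_forall_nonneg_iff]
  constructor
  · rintro ⟨δ, hδ, hw⟩ x hx hx0
    exact (mul_pos hδ (norm_pos_iff.2 hx0)).trans_le (hw x hx)
  · exact exists_forall_mul_norm_le_of_forall_pos hXrefl hCcone hCconv hCclosed hδ₀ hw₀

/-- Lemma 3.4, Casini–Miglierina: if X is a real reflexive Banach space
and C ⊆ X a closed convex cone whose positive dual cone C* has nonempty interior,
then int C* = C^{*s}, the set of strictly positive functionals on C. -/
theorem stmt5
    {X : Type*} [NormedAddCommGroup X] [NormedSpace ℝ X] [CompleteSpace X]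
    -- reflexivity of X
    (hXrefl : Function.Surjective (NormedSpace.inclusionInDoubleDual ℝ X))
    -- closed convex cone C
    (C : Set X)
    (hCcone : ∀ (r : ℝ), 0 ≤ r → ∀ x ∈ C, r • x ∈ C) (hCconv : Convex ℝ C)
    (hCclosed : IsClosed C)
    -- positive dual cone and strictly positive dual cone
    (Cstar : Set (X →L[ℝ] ℝ)) (hCstar : Cstar = {w : X →L[ℝ] ℝ | ∀ x ∈ C, 0 ≤ w x})
    (Cstrict : Set (X →L[ℝ] ℝ))
    (hCstrict : Cstrict = {w : X →L[ℝ] ℝ | ∀ x ∈ C, x ≠ 0 → 0 < w x})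
    (hint : (interior Cstar).Nonempty) :
    interior Cstar = Cstrict :=
  stmt5_general hXrefl C hCcone hCconv hCclosed Cstar hCstar Cstrict hCstrict hint
end

section
/- Assume the primal-dual pair {(P),(D)} (with data c ∈ X*, b ∈ Y*) is consistent, and let v be the value of the game G = (α,β,A) for some α ∈ int C*, β ∈ int K*. If v ≠ 0, then at least one of (P), (D) is strictly feasible; in fact val(P) = val(D), and at least one of the sets of optimal solutions S(P), S(D) is nonempty, convex, and bounded. -/
/-!
If `v > 0`, some `x₀ ∈ S` has a positive security level `m`, i.e. `⟨y, A x₀⟩ ≥ m ⟨y, β⟩` on `K`;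
as `β ∈ int K*`, this puts `A x₀` in `int K*`, so a large multiple of `x₀` is strictly feasible
for (P). Symmetrically, `v < 0` makes (D) strictly feasible. Under Slater's condition for (P),
separating `{(A x - b, ⟨c, x⟩ - val(P)) : x ∈ C}` from `int K* × (-∞, 0)` in `Y* × ℝ`, and
representing the separating functional through reflexivity of `Y`, gives a Lagrange multiplier
`y ∈ K`; it is dual feasible with `⟨y, b⟩ ≥ val(P)`, hence dual optimal, and the Slater point
bounds the set of dual optima. The case of (D) follows by exchanging the roles of the programs.
-/

open Set NormedSpace

lemma nonpos_of_forall_mul_le {a u : ℝ} (h : ∀ r : ℝ, 0 ≤ r → r * a ≤ u) : a ≤ 0 := by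
  by_contra! ha
  have := h ((|u| + 1) / a) (by positivity)
  rw [div_mul_cancel₀ _ ha.ne'] at this
  linarith [le_abs_self u]

def PointedCone.ofConvex {E : Type*} [AddCommGroup E] [Module ℝ E] (s : Set E) (hne : s.Nonempty)
    (hsmul : ∀ r : ℝ, 0 ≤ r → ∀ x ∈ s, r • x ∈ s) (hconv : Convex ℝ s) : PointedCone ℝ E :=
  .ofConeComb s hne fun x hx y hy a ha b hb => by
    -- `a • x + b • y` is the midpoint of `(2 * a) • x` and `(2 * b) • y`
    have := hconv (hsmul (2 * a) (by positivity) x hx) (hsmul (2 * b) (by positivity) y hy)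
      (by norm_num : (0 : ℝ) ≤ 1 / 2) (by norm_num : (0 : ℝ) ≤ 1 / 2) (by norm_num)
    simpa only [smul_smul, one_div, inv_mul_cancel_left₀ (two_ne_zero' ℝ)] using this

section DualCone

variable {F : Type*} [NormedAddCommGroup F] [NormedSpace ℝ F]

def dualCone (Q : Set F) : PointedCone ℝ (F →L[ℝ] ℝ) :=
  PointedCone.dual (topDualPairing ℝ F).flip Q

@[simp]
lemma mem_dualCone {Q : Set F} {w : F →L[ℝ] ℝ} : w ∈ dualCone Q ↔ ∀ y ∈ Q, 0 ≤ w y := .rfl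

lemma mem_interior_dualCone_iff {Q : Set F} {z : F →L[ℝ] ℝ} :
    z ∈ interior (dualCone Q : Set (F →L[ℝ] ℝ)) ↔ ∃ ε > 0, ∀ y ∈ Q, ε * ‖y‖ ≤ z y := by
  constructor
  · intro hz
    obtain ⟨ε, hε, hball⟩ := Metric.isOpen_iff.1 isOpen_interior z hz
    refine ⟨ε / 2, half_pos hε, fun y hy => ?_⟩
    rcases eq_or_ne y 0 with rfl | hy0
    · simp
    -- test `z` against `z - (ε / 2) • g`, where `g` norms `y`
    obtain ⟨g, hg, hgy⟩ := exists_dual_vector ℝ y (norm_ne_zero_iff.mpr hy0)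
    have hmem : z - (ε / 2) • g ∈ Metric.ball z ε := by
      rw [Metric.mem_ball, dist_eq_norm, sub_sub_cancel_left, norm_neg, norm_smul, hg, mul_one,
        Real.norm_of_nonneg (half_pos hε).le]
      exact half_lt_self hε
    have := (mem_dualCone.1 (interior_subset (hball hmem))) y hy
    simp only [sub_apply, smul_apply, hgy,
      RCLike.ofReal_real_eq_id, id, smul_eq_mul] at this
    linarith
  · rintro ⟨ε, hε, hzε⟩
    refine mem_interior.2 ⟨Metric.ball z ε, fun w hw => mem_dualCone.2 fun y hy => ?_,
      Metric.isOpen_ball, Metric.mem_ball_self hε⟩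
    have hwz : ‖w - z‖ * ‖y‖ ≤ ε * ‖y‖ :=
      mul_le_mul_of_nonneg_right (mem_ball_iff_norm.1 hw).le (norm_nonneg y)
    have := neg_le_of_abs_le ((w - z).le_opNorm y)
    rw [sub_apply] at this
    linarith [hzε y hy]

lemma mem_of_forall_mem_dualCone {Q : PointedCone ℝ F} (hQ : IsClosed (Q : Set F)) {y : F}
    (h : ∀ w ∈ dualCone (Q : Set F), 0 ≤ w y) : y ∈ Q := by
  by_contra hy
  obtain ⟨w, hwQ, hwy⟩ :=
    ProperCone.hyperplane_separation_point (⟨Q, hQ⟩ : ProperCone ℝ F) hy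
  exact hwy.not_ge (h w (mem_dualCone.2 hwQ))

lemma mem_interior_dualCone_of_le_of_eq_one {K : PointedCone ℝ F} {β φ : F →L[ℝ] ℝ}
    (hβ : β ∈ interior (dualCone (K : Set F) : Set (F →L[ℝ] ℝ))) {m : ℝ} (hm : 0 < m)
    (hφ : ∀ y ∈ K, β y = 1 → m ≤ φ y) :
    φ ∈ interior (dualCone (K : Set F) : Set (F →L[ℝ] ℝ)) := by
  obtain ⟨ε, hε, hβε⟩ := mem_interior_dualCone_iff.1 hβ
  refine mem_interior_dualCone_iff.2 ⟨m * ε, mul_pos hm hε, fun y hy => ?_⟩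
  rcases eq_or_ne y 0 with rfl | hy0
  · simp
  have hβy : 0 < β y := (mul_pos hε (norm_pos_iff.2 hy0)).trans_le (hβε y hy)
  have h1 := hφ _ (K.smul_mem (inv_nonneg.2 hβy.le) hy)
    (by rw [map_smul, smul_eq_mul, inv_mul_cancel₀ hβy.ne'])
  rw [map_smul, smul_eq_mul, le_inv_mul_iff₀ hβy] at h1
  nlinarith [hβε y hy]

lemma exists_smul_add_mem_interior_dualCone {Q : Set F} {φ : F →L[ℝ] ℝ}
    (hφ : φ ∈ interior (dualCone Q : Set (F →L[ℝ] ℝ))) (b : F →L[ℝ] ℝ) :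
    ∃ t : ℝ, 0 ≤ t ∧ t • φ + b ∈ interior (dualCone Q : Set (F →L[ℝ] ℝ)) := by
  obtain ⟨ε, hε, hφε⟩ := mem_interior_dualCone_iff.1 hφ
  refine ⟨(‖b‖ + 1) / ε, by positivity, mem_interior_dualCone_iff.2 ⟨1, one_pos, fun y hy => ?_⟩⟩
  have h1 : (‖b‖ + 1) * ‖y‖ ≤ (‖b‖ + 1) / ε * φ y := by
    rw [div_mul_eq_mul_div, le_div_iff₀ hε, mul_assoc, mul_comm ‖y‖]
    exact mul_le_mul_of_nonneg_left (hφε y hy) (by positivity)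
  have h2 := neg_le_of_abs_le (b.le_opNorm y)
  simp only [add_apply, smul_apply, smul_eq_mul]
  nlinarith

lemma exists_apply_prod_eq (hF : Function.Surjective (inclusionInDoubleDual ℝ F))
    (f : (F →L[ℝ] ℝ) × ℝ →L[ℝ] ℝ) : ∃ (y : F) (l : ℝ), ∀ z t, f (z, t) = z y + t * l := by
  obtain ⟨y, hy⟩ := hF (f.comp (.inl ℝ _ ℝ))
  refine ⟨y, f (0, 1), fun z t => ?_⟩
  have hz : f (z, 0) = z y := by
    rw [← dual_def ℝ F y z, hy]; rfl
  calc f (z, t) = f (z, 0) + t • f (0, 1) := by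
        rw [← map_smul, ← map_add, Prod.smul_mk, smul_zero, smul_eq_mul, mul_one, Prod.mk_add_mk,
          add_zero, zero_add]
    _ = z y + t * f (0, 1) := by rw [hz, smul_eq_mul]

end DualCone

section ConicProgram

variable {E F : Type*} [NormedAddCommGroup E] [NormedSpace ℝ E] [NormedAddCommGroup F]
  [NormedSpace ℝ F] (B : E →L[ℝ] F →L[ℝ] ℝ) (P : PointedCone ℝ E) (Q : PointedCone ℝ F)
  (c : E →L[ℝ] ℝ) (b : F →L[ℝ] ℝ)

def primalFeasible : Set E := {x ∈ P | B x - b ∈ dualCone (Q : Set F)}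

def dualFeasible : Set F := {y ∈ Q | -(B.flip y) + c ∈ dualCone (P : Set E)}

-- `sInf` / `sSup` of an empty or unbounded set of reals is `0`; the values are only used below
-- when both programs are feasible.
noncomputable def primalValue : ℝ := sInf (c '' primalFeasible B P Q b)

noncomputable def dualValue : ℝ := sSup (b '' dualFeasible B P Q c)

def primalOptimal : Set E := {x ∈ primalFeasible B P Q b | c x = primalValue B P Q c b}

def dualOptimal : Set F := {y ∈ dualFeasible B P Q c | b y = dualValue B P Q c b}

variable {B P Q c b}

lemma le_of_mem_primalFeasible {x : E} (hx : x ∈ primalFeasible B P Q b) {y : F} (hy : y ∈ Q) :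
    b y ≤ B x y := by
  have := mem_dualCone.1 hx.2 y hy
  rwa [sub_apply, sub_nonneg] at this

lemma le_of_mem_dualFeasible {y : F} (hy : y ∈ dualFeasible B P Q c) {x : E} (hx : x ∈ P) :
    B x y ≤ c x := by
  have := mem_dualCone.1 hy.2 x hx
  rw [add_apply, neg_apply, ContinuousLinearMap.flip_apply] at this
  linarith

lemma le_of_mem_primalFeasible_of_mem_dualFeasible {x : E} (hx : x ∈ primalFeasible B P Q b)
    {y : F} (hy : y ∈ dualFeasible B P Q c) : b y ≤ c x :=
  (le_of_mem_primalFeasible hx hy.1).trans (le_of_mem_dualFeasible hy hx.1)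

lemma convex_dualOptimal : Convex ℝ (dualOptimal B P Q c b) := by
  rintro y₁ ⟨⟨hy₁Q, hy₁⟩, hb₁⟩ y₂ ⟨⟨hy₂Q, hy₂⟩, hb₂⟩ s t hs ht hst
  have hcomb : -(B.flip (s • y₁ + t • y₂)) + c
      = s • (-(B.flip y₁) + c) + t • (-(B.flip y₂) + c) := by
    ext x
    simp only [map_add, map_smul, add_apply, neg_apply, smul_apply, smul_eq_mul]
    linear_combination (-c x) * hst
  refine ⟨⟨Q.convex hy₁Q hy₂Q hs ht hst, ?_⟩, ?_⟩
  · rw [hcomb]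
    exact (dualCone (P : Set E)).convex hy₁ hy₂ hs ht hst
  · rw [map_add, map_smul, map_smul, hb₁, hb₂, smul_eq_mul, smul_eq_mul, ← add_mul, hst, one_mul]

theorem exists_lagrange_multiplier (hF : Function.Surjective (inclusionInDoubleDual ℝ F))
    (hQ : IsClosed (Q : Set F)) {x₀ : E} (hx₀ : x₀ ∈ P)
    (hslater : B x₀ - b ∈ interior (dualCone (Q : Set F) : Set (F →L[ℝ] ℝ))) {m : ℝ}
    (hm : ∀ x ∈ primalFeasible B P Q b, m ≤ c x) :
    ∃ y ∈ Q, ∀ x ∈ P, m ≤ c x - B x y + b y := by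
  set D : Set (F →L[ℝ] ℝ) := (dualCone (Q : Set F) : Set (F →L[ℝ] ℝ))
  set G : Set ((F →L[ℝ] ℝ) × ℝ) := (fun x => (B x - b, c x - m)) '' P
  have hG : Convex ℝ G := by
    have hGeq : G = (fun p => -(b, m) + p) '' ((B.prod c).toLinearMap '' P) := by
      rw [image_image]
      refine image_congr fun x _ => ?_
      rw [neg_add_eq_sub]
      rfl
    rw [hGeq]
    exact (P.convex.linear_image _).translate _
  have hdisj : Disjoint (interior D ×ˢ Iio (0 : ℝ)) G := by
    rw [disjoint_left]
    rintro _ ⟨hz, ht⟩ ⟨x, hx, rfl⟩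
    exact (not_lt.2 (sub_nonneg.2 (hm x ⟨hx, interior_subset hz⟩))) ht
  obtain ⟨f, u, hf_lt, hf_ge⟩ := geometric_hahn_banach_open
    ((dualCone (Q : Set F)).convex.interior.prod (convex_Iio (0 : ℝ)))
    (isOpen_interior.prod isOpen_Iio) hG hdisj
  obtain ⟨y, l, hf⟩ := exists_apply_prod_eq hF f
  have hf_le : ∀ z ∈ D, ∀ t ≤ (0 : ℝ), z y + t * l ≤ u := by
    have hcl : D ×ˢ Iic (0 : ℝ) ⊆ closure (interior D ×ˢ Iio (0 : ℝ)) := by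
      rw [closure_prod_eq, closure_Iio,
        (dualCone (Q : Set F)).convex.closure_interior_eq_closure_of_nonempty_interior
          ⟨_, hslater⟩]
      exact prod_mono subset_closure subset_rfl
    intro z hz t ht
    rw [← hf]
    exact closure_minimal (fun p hp => (hf_lt p hp).le) (isClosed_le f.continuous continuous_const)
      (hcl (mk_mem_prod hz ht))
  have hu : 0 ≤ u := by simpa using hf_le 0 (dualCone (Q : Set F)).zero_mem 0 le_rfl
  have hyD : ∀ z ∈ D, z y ≤ 0 := fun z hz => nonpos_of_forall_mul_le fun r hr => by
    simpa using hf_le (r • z) ((dualCone (Q : Set F)).smul_mem hr hz) 0 le_rfl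
  -- compare the separation at `(B x₀ - b, -1)` and at the image of `x₀`, using `m ≤ c x₀`
  have hl : 0 < l := by
    have h1 := hf_lt (B x₀ - b, -1) (mk_mem_prod hslater (mem_Iio.2 neg_one_lt_zero))
    have h2 := hf_ge _ ⟨x₀, hx₀, rfl⟩
    have h3 := hm x₀ ⟨hx₀, interior_subset hslater⟩
    rw [hf] at h1 h2
    nlinarith
  refine ⟨-l⁻¹ • y, mem_of_forall_mem_dualCone hQ fun w hw => ?_, fun x hx => ?_⟩
  · rw [map_smul, smul_eq_mul, neg_mul, neg_nonneg]
    exact mul_nonpos_of_nonneg_of_nonpos (inv_nonneg.2 hl.le) (hyD w hw)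
  · have h := hf_ge _ ⟨x, hx, rfl⟩
    rw [hf, sub_apply] at h
    simp only [map_smul, smul_eq_mul, neg_mul, sub_neg_eq_add]
    have hkey : l⁻¹ * ((B x) y - b y + (c x - m) * l)
        = c x + l⁻¹ * (B x) y + -(l⁻¹ * b y) - m := by
      field_simp
      ring
    linarith [mul_nonneg (inv_nonneg.2 hl.le) (hu.trans h)]

theorem exists_mem_dualFeasible_le (hF : Function.Surjective (inclusionInDoubleDual ℝ F))
    (hQ : IsClosed (Q : Set F)) {x₀ : E} (hx₀ : x₀ ∈ P)
    (hslater : B x₀ - b ∈ interior (dualCone (Q : Set F) : Set (F →L[ℝ] ℝ))) {m : ℝ}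
    (hm : ∀ x ∈ primalFeasible B P Q b, m ≤ c x) :
    ∃ y ∈ dualFeasible B P Q c, m ≤ b y := by
  obtain ⟨y, hyQ, hy⟩ := exists_lagrange_multiplier hF hQ hx₀ hslater hm
  -- the Lagrangian is bounded below on the cone `P`, so its linear part is nonnegative there
  have hfeas : ∀ x ∈ P, B x y ≤ c x := fun x hx => by
    have := nonpos_of_forall_mul_le (a := B x y - c x) (u := b y - m) fun r hr => by
      have := hy (r • x) (P.smul_mem hr hx)
      simp only [map_smul, smul_apply, smul_eq_mul] at this
      linarith
    linarith
  refine ⟨y, ⟨hyQ, mem_dualCone.2 fun x hx => ?_⟩, by simpa using hy 0 P.zero_mem⟩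
  simpa using hfeas x hx

lemma isBounded_dualOptimal {x₀ : E} (hx₀ : x₀ ∈ P)
    (hslater : B x₀ - b ∈ interior (dualCone (Q : Set F) : Set (F →L[ℝ] ℝ))) :
    Bornology.IsBounded (dualOptimal B P Q c b) := by
  obtain ⟨ε, hε, hεQ⟩ := mem_interior_dualCone_iff.1 hslater
  refine (Metric.isBounded_closedBall (x := 0) (r := (c x₀ - dualValue B P Q c b) / ε)).subset
    fun y ⟨hy, hby⟩ => ?_
  have h1 := hεQ y hy.1
  have h2 := le_of_mem_dualFeasible hy hx₀
  rw [sub_apply] at h1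
  rw [Metric.mem_closedBall, dist_zero_right, le_div_iff₀ hε]
  linarith

theorem strong_duality_of_slater (hF : Function.Surjective (inclusionInDoubleDual ℝ F))
    (hQ : IsClosed (Q : Set F)) {x₀ : E} (hx₀ : x₀ ∈ P)
    (hslater : B x₀ - b ∈ interior (dualCone (Q : Set F) : Set (F →L[ℝ] ℝ)))
    (hD : (dualFeasible B P Q c).Nonempty) :
    primalValue B P Q c b = dualValue B P Q c b ∧ (dualOptimal B P Q c b).Nonempty ∧
      Convex ℝ (dualOptimal B P Q c b) ∧ Bornology.IsBounded (dualOptimal B P Q c b) := by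
  have hx₀F : x₀ ∈ primalFeasible B P Q b := ⟨hx₀, interior_subset hslater⟩
  have hweak : dualValue B P Q c b ≤ primalValue B P Q c b :=
    csSup_le (hD.image _) <| forall_mem_image.2
      fun y hy => le_csInf (Set.Nonempty.image _ ⟨x₀, hx₀F⟩) <|
        forall_mem_image.2 fun x hx => le_of_mem_primalFeasible_of_mem_dualFeasible hx hy
  obtain ⟨y₁, hy₁⟩ := hD
  have hbelow : BddBelow (c '' primalFeasible B P Q b) :=
    ⟨b y₁, forall_mem_image.2 fun x hx => le_of_mem_primalFeasible_of_mem_dualFeasible hx hy₁⟩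
  have habove : BddAbove (b '' dualFeasible B P Q c) :=
    ⟨c x₀, forall_mem_image.2 fun y hy => le_of_mem_primalFeasible_of_mem_dualFeasible hx₀F hy⟩
  obtain ⟨y, hy, hby⟩ := exists_mem_dualFeasible_le hF hQ hx₀ hslater
    fun x hx => csInf_le hbelow (mem_image_of_mem c hx)
  have hyle : b y ≤ dualValue B P Q c b := le_csSup habove (mem_image_of_mem b hy)
  exact ⟨le_antisymm (hby.trans hyle) hweak, ⟨y, hy, le_antisymm hyle (hweak.trans hby)⟩,
    convex_dualOptimal, isBounded_dualOptimal hx₀ hslater⟩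

lemma primalFeasible_neg_flip : primalFeasible (-B.flip) Q P (-c) = dualFeasible B P Q c := by
  simp only [primalFeasible, dualFeasible, neg_apply, sub_neg_eq_add]

lemma dualFeasible_neg_flip : dualFeasible (-B.flip) Q P (-b) = primalFeasible B P Q b := by
  have h : ∀ x, -((-B.flip).flip x) + -b = B x - b := fun x => by
    ext y
    simp [sub_eq_add_neg]
  simp only [primalFeasible, dualFeasible, h]

lemma primalValue_neg_flip : primalValue (-B.flip) Q P (-b) (-c) = -dualValue B P Q c b := by
  rw [primalValue, dualValue, primalFeasible_neg_flip, ← Real.sInf_neg, ← image_neg_eq_neg,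
    image_image]
  rfl

lemma dualValue_neg_flip : dualValue (-B.flip) Q P (-b) (-c) = -primalValue B P Q c b := by
  rw [primalValue, dualValue, dualFeasible_neg_flip, ← Real.sSup_neg, ← image_neg_eq_neg,
    image_image]
  rfl

lemma dualOptimal_neg_flip : dualOptimal (-B.flip) Q P (-b) (-c) = primalOptimal B P Q c b := by
  simp only [dualOptimal, primalOptimal, dualFeasible_neg_flip, dualValue_neg_flip, neg_apply,
    neg_inj]

theorem strong_duality_of_dual_slater (hE : Function.Surjective (inclusionInDoubleDual ℝ E))
    (hP : IsClosed (P : Set E)) {y₀ : F} (hy₀ : y₀ ∈ Q)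
    (hslater : -(B.flip y₀) + c ∈ interior (dualCone (P : Set E) : Set (E →L[ℝ] ℝ)))
    (hfeas : (primalFeasible B P Q b).Nonempty) :
    primalValue B P Q c b = dualValue B P Q c b ∧ (primalOptimal B P Q c b).Nonempty ∧
      Convex ℝ (primalOptimal B P Q c b) ∧ Bornology.IsBounded (primalOptimal B P Q c b) := by
  have h := strong_duality_of_slater (B := -B.flip) (c := -b) (b := -c) hE hP hy₀
    (by rwa [neg_apply, sub_neg_eq_add]) (by rwa [dualFeasible_neg_flip])
  rw [primalValue_neg_flip, dualValue_neg_flip, neg_inj, dualOptimal_neg_flip] at h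
  exact ⟨h.1.symm, h.2⟩

end ConicProgram

section Game

variable {E F : Type*} [NormedAddCommGroup E] [NormedSpace ℝ E] [NormedAddCommGroup F]
  [NormedSpace ℝ F] {A : E →L[ℝ] F →L[ℝ] ℝ} {C : PointedCone ℝ E} {K : PointedCone ℝ F}

lemma exists_primal_slater_point {β : F →L[ℝ] ℝ}
    (hβ : β ∈ interior (dualCone (K : Set F) : Set (F →L[ℝ] ℝ))) {S : Set E} (hSC : S ⊆ C)
    (hS : S.Nonempty) (hbdd : ∀ x ∈ S, BddBelow ((fun y => A x y) '' {y ∈ K | β y = 1}))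
    (hv : 0 < sSup ((fun x => sInf ((fun y => A x y) '' {y ∈ K | β y = 1})) '' S))
    (b : F →L[ℝ] ℝ) : ∃ x ∈ C, A x - b ∈ interior (dualCone (K : Set F) : Set (F →L[ℝ] ℝ)) := by
  obtain ⟨_, ⟨x₀, hx₀S, rfl⟩, hx₀⟩ := exists_lt_of_lt_csSup (hS.image _) hv
  have hint := mem_interior_dualCone_of_le_of_eq_one (φ := A x₀) hβ hx₀
    fun y hyK hβy => csInf_le (hbdd x₀ hx₀S) ⟨y, ⟨hyK, hβy⟩, rfl⟩
  obtain ⟨t, ht, htx⟩ := exists_smul_add_mem_interior_dualCone hint (-b)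
  rw [← sub_eq_add_neg, ← map_smul] at htx
  exact ⟨t • x₀, C.smul_mem ht (hSC hx₀S), htx⟩

lemma exists_dual_slater_point {α : E →L[ℝ] ℝ}
    (hα : α ∈ interior (dualCone (C : Set E) : Set (E →L[ℝ] ℝ))) {T : Set F} (hTK : T ⊆ K)
    (hT : T.Nonempty) (hbdd : ∀ y ∈ T, BddAbove ((fun x => A x y) '' {x ∈ C | α x = 1}))
    (hv : sInf ((fun y => sSup ((fun x => A x y) '' {x ∈ C | α x = 1})) '' T) < 0)
    (c : E →L[ℝ] ℝ) :
    ∃ y ∈ K, -(A.flip y) + c ∈ interior (dualCone (C : Set E) : Set (E →L[ℝ] ℝ)) := by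
  obtain ⟨_, ⟨y₀, hy₀T, rfl⟩, hy₀⟩ := exists_lt_of_csInf_lt (hT.image _) hv
  have hint := mem_interior_dualCone_of_le_of_eq_one (φ := -A.flip y₀) hα (neg_pos.2 hy₀)
    fun x hxC hαx => by
      simpa using le_csSup (hbdd y₀ hy₀T) ⟨x, ⟨hxC, hαx⟩, rfl⟩
  obtain ⟨t, ht, hty⟩ := exists_smul_add_mem_interior_dualCone hint c
  rw [smul_neg, ← map_smul] at hty
  exact ⟨t • y₀, K.smul_mem ht (hTK hy₀T), hty⟩

end Game

theorem stmt8_general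
    {X Y : Type*} [NormedAddCommGroup X] [NormedSpace ℝ X]
    [NormedAddCommGroup Y] [NormedSpace ℝ Y]
    -- reflexivity of X and Y
    (hXrefl : Function.Surjective (NormedSpace.inclusionInDoubleDual ℝ X))
    (hYrefl : Function.Surjective (NormedSpace.inclusionInDoubleDual ℝ Y))
    (A : X →L[ℝ] (Y →L[ℝ] ℝ))
    -- closed convex cones C, K with solid dual cones
    (C : Set X) (K : Set Y)
    (hCcone : ∀ (r : ℝ), 0 ≤ r → ∀ x ∈ C, r • x ∈ C) (hCconv : Convex ℝ C)
    (hCclosed : IsClosed C)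
    (hKcone : ∀ (r : ℝ), 0 ≤ r → ∀ y ∈ K, r • y ∈ K) (hKconv : Convex ℝ K)
    (hKclosed : IsClosed K)
    (Cstar : Set (X →L[ℝ] ℝ)) (hCstar : Cstar = {w : X →L[ℝ] ℝ | ∀ x ∈ C, 0 ≤ w x})
    (Kstar : Set (Y →L[ℝ] ℝ)) (hKstar : Kstar = {z : Y →L[ℝ] ℝ | ∀ y ∈ K, 0 ≤ z y})
    -- data of the programs and consistency
    (c : X →L[ℝ] ℝ) (b : Y →L[ℝ] ℝ)
    (FeasP : Set X) (hFeasP : FeasP = {x | x ∈ C ∧ A x - b ∈ Kstar})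
    (FeasD : Set Y) (hFeasD : FeasD = {y | y ∈ K ∧ -(A.flip y) + c ∈ Cstar})
    (hPne : FeasP.Nonempty) (hDne : FeasD.Nonempty)
    (valP valD : ℝ)
    (hvalP : valP = sInf ((fun x => c x) '' FeasP))
    (hvalD : valD = sSup ((fun y => b y) '' FeasD))
    (SolP : Set X) (hSolP : SolP = {x ∈ FeasP | c x = valP})
    (SolD : Set Y) (hSolD : SolD = {y ∈ FeasD | b y = valD})
    -- the game G = (α,β,A) with α ∈ int C*, β ∈ int K*
    (α : X →L[ℝ] ℝ) (hα : α ∈ interior Cstar)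
    (β : Y →L[ℝ] ℝ) (hβ : β ∈ interior Kstar)
    (S : Set X) (hS : S = {x ∈ C | α x = 1})
    (T : Set Y) (hT : T = {y ∈ K | β y = 1})
    -- finite security levels (F3)
    (hSne : S.Nonempty) (hTne : T.Nonempty)
    (hbb : ∀ x ∈ S, BddBelow ((fun y => A x y) '' T))
    (hba' : ∀ y ∈ T, BddAbove ((fun x => A x y) '' S))
    -- v is the value of the game
    (v : ℝ)
    (hv : v = sSup ((fun x => sInf ((fun y => A x y) '' T)) '' S))
    (hv' : v = sInf ((fun y => sSup ((fun x => A x y) '' S)) '' T))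
    -- hypothesis of part (i): v ≠ 0
    (hvne : v ≠ 0) :
    -- at least one of (P), (D) is strictly feasible
    ((∃ x ∈ C, A x - b ∈ interior Kstar) ∨ (∃ y ∈ K, -(A.flip y) + c ∈ interior Cstar)) ∧
    -- val(P) = val(D)
    valP = valD ∧
    -- at least one of S(P), S(D) is nonempty, convex and bounded
    ((SolP.Nonempty ∧ Convex ℝ SolP ∧ Bornology.IsBounded SolP) ∨
     (SolD.Nonempty ∧ Convex ℝ SolD ∧ Bornology.IsBounded SolD)) := by
  subst hCstar hKstar hFeasP hFeasD hvalP hvalD hSolP hSolD hS hT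
  obtain ⟨x₁, hx₁⟩ := hSne
  obtain ⟨y₁, hy₁⟩ := hTne
  set C' := PointedCone.ofConvex C ⟨x₁, hx₁.1⟩ hCcone hCconv
  set K' := PointedCone.ofConvex K ⟨y₁, hy₁.1⟩ hKcone hKconv
  rcases hvne.lt_or_gt with hneg | hpos
  · obtain ⟨y, hyK, hy⟩ := exists_dual_slater_point (C := C') (K := K') hα (fun y hy => hy.1)
      ⟨y₁, hy₁⟩ hba' (hv' ▸ hneg) c
    obtain ⟨hval, hopt⟩ := strong_duality_of_dual_slater hXrefl hCclosed hyK hy hPne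
    exact ⟨Or.inr ⟨y, hyK, hy⟩, hval, Or.inl hopt⟩
  · obtain ⟨x, hxC, hx⟩ := exists_primal_slater_point (C := C') (K := K') hβ (fun x hx => hx.1)
      ⟨x₁, hx₁⟩ hbb (hv ▸ hpos) b
    obtain ⟨hval, hopt⟩ := strong_duality_of_slater hYrefl hKclosed hxC hx hDne
    exact ⟨Or.inl ⟨x, hxC, hx⟩, hval, Or.inr hopt⟩

/-- Theorem 4.1(i): if {(P),(D)} is consistent and the game
G = (α,β,A) has value v ≠ 0, then at least one of (P),(D) is strictly feasible;
in fact val(P) = val(D) and at least one of S(P), S(D) is nonempty, convex and bounded. -/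
theorem stmt8
    {X Y : Type*} [NormedAddCommGroup X] [NormedSpace ℝ X] [CompleteSpace X]
    [NormedAddCommGroup Y] [NormedSpace ℝ Y] [CompleteSpace Y]
    -- reflexivity of X and Y
    (hXrefl : Function.Surjective (NormedSpace.inclusionInDoubleDual ℝ X))
    (hYrefl : Function.Surjective (NormedSpace.inclusionInDoubleDual ℝ Y))
    (A : X →L[ℝ] (Y →L[ℝ] ℝ))
    -- closed convex cones C, K with solid dual cones
    (C : Set X) (K : Set Y)
    (hCcone : ∀ (r : ℝ), 0 ≤ r → ∀ x ∈ C, r • x ∈ C) (hCconv : Convex ℝ C)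
    (hCclosed : IsClosed C)
    (hKcone : ∀ (r : ℝ), 0 ≤ r → ∀ y ∈ K, r • y ∈ K) (hKconv : Convex ℝ K)
    (hKclosed : IsClosed K)
    (Cstar : Set (X →L[ℝ] ℝ)) (hCstar : Cstar = {w : X →L[ℝ] ℝ | ∀ x ∈ C, 0 ≤ w x})
    (Kstar : Set (Y →L[ℝ] ℝ)) (hKstar : Kstar = {z : Y →L[ℝ] ℝ | ∀ y ∈ K, 0 ≤ z y})
    -- data of the programs and consistency
    (c : X →L[ℝ] ℝ) (b : Y →L[ℝ] ℝ)
    (FeasP : Set X) (hFeasP : FeasP = {x | x ∈ C ∧ A x - b ∈ Kstar})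
    (FeasD : Set Y) (hFeasD : FeasD = {y | y ∈ K ∧ -(A.flip y) + c ∈ Cstar})
    (hPne : FeasP.Nonempty) (hDne : FeasD.Nonempty)
    (valP valD : ℝ)
    (hvalP : valP = sInf ((fun x => c x) '' FeasP))
    (hvalD : valD = sSup ((fun y => b y) '' FeasD))
    (SolP : Set X) (hSolP : SolP = {x ∈ FeasP | c x = valP})
    (SolD : Set Y) (hSolD : SolD = {y ∈ FeasD | b y = valD})
    -- the game G = (α,β,A) with α ∈ int C*, β ∈ int K*
    (α : X →L[ℝ] ℝ) (hα : α ∈ interior Cstar)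
    (β : Y →L[ℝ] ℝ) (hβ : β ∈ interior Kstar)
    (S : Set X) (hS : S = {x ∈ C | α x = 1})
    (T : Set Y) (hT : T = {y ∈ K | β y = 1})
    -- finite security levels (F3)
    (hSne : S.Nonempty) (hTne : T.Nonempty)
    (hbb : ∀ x ∈ S, BddBelow ((fun y => A x y) '' T))
    (hba : BddAbove ((fun x => sInf ((fun y => A x y) '' T)) '' S))
    (hba' : ∀ y ∈ T, BddAbove ((fun x => A x y) '' S))
    (hbb' : BddBelow ((fun y => sSup ((fun x => A x y) '' S)) '' T))
    -- v is the value of the game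
    (v : ℝ)
    (hv : v = sSup ((fun x => sInf ((fun y => A x y) '' T)) '' S))
    (hv' : v = sInf ((fun y => sSup ((fun x => A x y) '' S)) '' T))
    -- hypothesis of part (i): v ≠ 0
    (hvne : v ≠ 0) :
    -- at least one of (P), (D) is strictly feasible
    ((∃ x ∈ C, A x - b ∈ interior Kstar) ∨ (∃ y ∈ K, -(A.flip y) + c ∈ interior Cstar)) ∧
    -- val(P) = val(D)
    valP = valD ∧
    -- at least one of S(P), S(D) is nonempty, convex and bounded
    ((SolP.Nonempty ∧ Convex ℝ SolP ∧ Bornology.IsBounded SolP) ∨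
     (SolD.Nonempty ∧ Convex ℝ SolD ∧ Bornology.IsBounded SolD)) :=
  stmt8_general hXrefl hYrefl A C K hCcone hCconv hCclosed hKcone hKconv hKclosed Cstar hCstar Kstar
    hKstar c b FeasP hFeasP FeasD hFeasD hPne hDne valP valD hvalP hvalD SolP hSolP SolD hSolD α hα
    β hβ S hS T hT hSne hTne hbb hba' v hv hv' hvne
end

section
/- Assume the primal-dual pair {(P),(D)} (with data c ∈ X*, b ∈ Y*) is consistent, and let v be the value of the game G = (α,β,A) for some α ∈ int C*, β ∈ int K*. If v = 0, B^I ∩ c^⊥ ≠ ∅, and B^II ∩ b^⊥ ≠ ∅, then neither (P) nor (D) is strictly feasible. If in addition B^I ∩ c^⊥ ∩ F(P) ≠ ∅ and B^II ∩ b^⊥ ∩ F(D) ≠ ∅, then val(P) = val(D) = 0, B^I ∩ S(P) ≠ ∅, and B^II ∩ S(D) ≠ ∅. -/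
/-!
Since `α` and `β` are interior points of the dual cones, every nonzero point of `C` (resp. `K`)
is a positive multiple of a strategy. An optimal strategy `x₀` of player I guarantees the value
`0`, so `A x₀` is nonnegative on the whole cone `K`; dually `A x y₀ ≤ 0` on `C` for an optimal
`y₀` of player II. If moreover `c x₀ = 0`, evaluating `-A* y + c` at `x₀` gives `-A x₀ y ≤ 0`,
so it cannot be strictly positive on `C \ {0}`, i.e. `(D)` has no strictly feasible point; the
same argument with `y₀` and `b y₀ = 0` applies to `(P)`. When the optimal strategies are also
feasible, weak duality `b y ≤ A x y ≤ c x` shows that they attain the common value `0`.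
-/

open Set

section DualCone

variable {E : Type*} [NormedAddCommGroup E] [NormedSpace ℝ E]

/-- An interior point of the dual cone of `s` is strictly positive on `s \ {0}`: otherwise it
could be pushed out of the dual cone by subtracting a small multiple of a norming functional. -/
theorem pos_of_mem_interior_dual {s : Set E} {w : E →L[ℝ] ℝ}
    (hw : w ∈ interior {f : E →L[ℝ] ℝ | ∀ x ∈ s, 0 ≤ f x}) {x : E} (hx : x ∈ s) (hx0 : x ≠ 0) :
    0 < w x := by
  obtain ⟨ε, hε, hball⟩ := Metric.mem_nhds_iff.mp (mem_interior_iff_mem_nhds.mp hw)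
  obtain ⟨g, hg, hgx⟩ := exists_dual_vector'' ℝ x
  have hmem : w - (ε / 2) • g ∈ Metric.ball w ε := by
    rw [Metric.mem_ball, dist_eq_norm, sub_sub_cancel_left, norm_neg, norm_smul,
      Real.norm_of_nonneg (by positivity)]
    nlinarith [norm_nonneg g]
  have hle : 0 ≤ w x - ε / 2 * ‖x‖ := by
    simpa [hgx] using hball hmem x hx
  have := norm_pos_iff.mpr hx0
  nlinarith

theorem notMem_interior_dual_of_apply_nonpos {s : Set E} {w : E →L[ℝ] ℝ} {x : E} (hx : x ∈ s)
    (hx0 : x ≠ 0) (hwx : w x ≤ 0) : w ∉ interior {f : E →L[ℝ] ℝ | ∀ x ∈ s, 0 ≤ f x} :=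
  fun hw => (pos_of_mem_interior_dual hw hx hx0).not_ge hwx

theorem nonneg_on_cone_of_nonneg_on_base {K : Set E}
    (hK : ∀ r : ℝ, 0 ≤ r → ∀ y ∈ K, r • y ∈ K) {β : E →L[ℝ] ℝ}
    (hβ : β ∈ interior {z : E →L[ℝ] ℝ | ∀ y ∈ K, 0 ≤ z y}) {f : E →L[ℝ] ℝ}
    (hf : ∀ y ∈ {y ∈ K | β y = 1}, 0 ≤ f y) {y : E} (hy : y ∈ K) : 0 ≤ f y := by
  rcases eq_or_ne y 0 with rfl | hy0
  · simp
  have hβy : 0 < β y := pos_of_mem_interior_dual hβ hy hy0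
  have hbase : (β y)⁻¹ • y ∈ {y ∈ K | β y = 1} :=
    ⟨hK _ (inv_nonneg.mpr hβy.le) y hy, by simp [hβy.ne']⟩
  have := hf _ hbase
  rw [map_smul, smul_eq_mul] at this
  exact (mul_nonneg_iff_of_pos_left (inv_pos.mpr hβy)).mp this

end DualCone

theorem weak_duality {X Y : Type*} [NormedAddCommGroup X] [NormedSpace ℝ X]
    [NormedAddCommGroup Y] [NormedSpace ℝ Y] {A : X →L[ℝ] (Y →L[ℝ] ℝ)} {C : Set X} {K : Set Y}
    {c : X →L[ℝ] ℝ} {b : Y →L[ℝ] ℝ} {x : X} {y : Y}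
    (hx : x ∈ C) (hAx : ∀ y ∈ K, 0 ≤ (A x - b) y)
    (hy : y ∈ K) (hAy : ∀ x ∈ C, 0 ≤ (-(A.flip y) + c) x) : b y ≤ c x := by
  have h₁ := hAx y hy
  have h₂ := hAy x hx
  simp only [sub_apply, add_apply,
    neg_apply, ContinuousLinearMap.flip_apply] at h₁ h₂
  linarith

theorem stmt10_general
    {X Y : Type*} [NormedAddCommGroup X] [NormedSpace ℝ X]
    [NormedAddCommGroup Y] [NormedSpace ℝ Y]
    (A : X →L[ℝ] (Y →L[ℝ] ℝ))
    -- closed convex cones C, K with solid dual cones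
    (C : Set X) (K : Set Y)
    (hCcone : ∀ (r : ℝ), 0 ≤ r → ∀ x ∈ C, r • x ∈ C)
    (hKcone : ∀ (r : ℝ), 0 ≤ r → ∀ y ∈ K, r • y ∈ K)
    (Cstar : Set (X →L[ℝ] ℝ)) (hCstar : Cstar = {w : X →L[ℝ] ℝ | ∀ x ∈ C, 0 ≤ w x})
    (Kstar : Set (Y →L[ℝ] ℝ)) (hKstar : Kstar = {z : Y →L[ℝ] ℝ | ∀ y ∈ K, 0 ≤ z y})
    -- data of the programs and consistency
    (c : X →L[ℝ] ℝ) (b : Y →L[ℝ] ℝ)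
    (FeasP : Set X) (hFeasP : FeasP = {x | x ∈ C ∧ A x - b ∈ Kstar})
    (FeasD : Set Y) (hFeasD : FeasD = {y | y ∈ K ∧ -(A.flip y) + c ∈ Cstar})
    (valP valD : ℝ)
    (hvalP : valP = sInf ((fun x => c x) '' FeasP))
    (hvalD : valD = sSup ((fun y => b y) '' FeasD))
    (SolP : Set X) (hSolP : SolP = {x ∈ FeasP | c x = valP})
    (SolD : Set Y) (hSolD : SolD = {y ∈ FeasD | b y = valD})
    -- the game G = (α,β,A) with α ∈ int C*, β ∈ int K*
    (α : X →L[ℝ] ℝ) (hα : α ∈ interior Cstar)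
    (β : Y →L[ℝ] ℝ) (hβ : β ∈ interior Kstar)
    (S : Set X) (hS : S = {x ∈ C | α x = 1})
    (T : Set Y) (hT : T = {y ∈ K | β y = 1})
    -- finite security levels (F3)
    (hbb : ∀ x ∈ S, BddBelow ((fun y => A x y) '' T))
    (hba' : ∀ y ∈ T, BddAbove ((fun x => A x y) '' S))
    (v : ℝ)
    -- sets of optimal strategies and the orthogonal complements c^⊥, b^⊥
    (BI : Set X) (hBI : BI = {x ∈ S | sInf ((fun y => A x y) '' T) = v})
    (BII : Set Y) (hBII : BII = {y ∈ T | sSup ((fun x => A x y) '' S) = v})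
    (cperp : Set X) (hcperp : cperp = {x : X | c x = 0})
    (bperp : Set Y) (hbperp : bperp = {y : Y | b y = 0})
    -- hypotheses of part (iii): v = 0, B^I ∩ c^⊥ ≠ ∅ and B^II ∩ b^⊥ ≠ ∅
    (hv0 : v = 0)
    (hBIne : (BI ∩ cperp).Nonempty) (hBIIne : (BII ∩ bperp).Nonempty) :
    -- neither (P) nor (D) is strictly feasible
    (¬ ∃ x ∈ C, A x - b ∈ interior Kstar) ∧
    (¬ ∃ y ∈ K, -(A.flip y) + c ∈ interior Cstar) ∧
    -- additional conclusion under the extra feasibility assumptions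
    ((BI ∩ cperp ∩ FeasP).Nonempty → (BII ∩ bperp ∩ FeasD).Nonempty →
      valP = 0 ∧ valD = 0 ∧ (BI ∩ SolP).Nonempty ∧ (BII ∩ SolD).Nonempty) := by
  subst hCstar hKstar hFeasP hFeasD hSolP hSolD hS hT hBI hBII hcperp hbperp hv0
  obtain ⟨x₀, ⟨hx₀S, hx₀opt⟩, hx₀c : c x₀ = 0⟩ := hBIne
  obtain ⟨y₀, ⟨hy₀T, hy₀opt⟩, hy₀b : b y₀ = 0⟩ := hBIIne
  have hAx₀ : ∀ y ∈ K, 0 ≤ A x₀ y := fun y hy =>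
    nonneg_on_cone_of_nonneg_on_base hKcone hβ
      (fun y' hy' => hx₀opt ▸ csInf_le (hbb x₀ hx₀S) (mem_image_of_mem _ hy')) hy
  have hAy₀ : ∀ x ∈ C, A x y₀ ≤ 0 := fun x hx => neg_nonneg.mp <|
    nonneg_on_cone_of_nonneg_on_base (f := -A.flip y₀) hCcone hα
      (fun x' hx' => neg_nonneg.mpr (hy₀opt ▸ le_csSup (hba' y₀ hy₀T) (mem_image_of_mem _ hx')))
      hx
  have hx₀ne : x₀ ≠ 0 := by rintro rfl; simp at hx₀S
  have hy₀ne : y₀ ≠ 0 := by rintro rfl; simp at hy₀T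
  refine ⟨?_, ?_, ?_⟩
  · rintro ⟨x, hx, hint⟩
    exact notMem_interior_dual_of_apply_nonpos hy₀T.1 hy₀ne
      (by simpa [hy₀b] using hAy₀ x hx) hint
  · rintro ⟨y, hy, hint⟩
    exact notMem_interior_dual_of_apply_nonpos hx₀S.1 hx₀ne
      (by simpa [hx₀c] using hAx₀ y hy) hint
  rintro ⟨x₁, ⟨hx₁opt, hx₁c : c x₁ = 0⟩, hx₁F⟩ ⟨y₁, ⟨hy₁opt, hy₁b : b y₁ = 0⟩, hy₁F⟩
  have hvalP0 : valP = 0 := hvalP ▸ IsLeast.csInf_eq ⟨⟨x₁, hx₁F, hx₁c⟩,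
    forall_mem_image.2 fun x hx => hy₁b ▸ weak_duality hx.1 hx.2 hy₁F.1 hy₁F.2⟩
  have hvalD0 : valD = 0 := hvalD ▸ IsGreatest.csSup_eq ⟨⟨y₁, hy₁F, hy₁b⟩,
    forall_mem_image.2 fun y hy => hx₁c ▸ weak_duality hx₁F.1 hx₁F.2 hy.1 hy.2⟩
  exact ⟨hvalP0, hvalD0, ⟨x₁, hx₁opt, hx₁F, hx₁c.trans hvalP0.symm⟩,
    ⟨y₁, hy₁opt, hy₁F, hy₁b.trans hvalD0.symm⟩⟩

/-- Theorem 4.1(iii): if {(P),(D)} is consistent, the game G = (α,β,A)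
has value v = 0, B^I ∩ c^⊥ ≠ ∅ and B^II ∩ b^⊥ ≠ ∅, then neither (P) nor (D) is strictly
feasible; if moreover B^I ∩ c^⊥ ∩ F(P) ≠ ∅ and B^II ∩ b^⊥ ∩ F(D) ≠ ∅, then
val(P) = val(D) = 0 and B^I ∩ S(P) ≠ ∅, B^II ∩ S(D) ≠ ∅. -/
theorem stmt10
    {X Y : Type*} [NormedAddCommGroup X] [NormedSpace ℝ X] [CompleteSpace X]
    [NormedAddCommGroup Y] [NormedSpace ℝ Y] [CompleteSpace Y]
    -- reflexivity of X and Y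
    (hXrefl : Function.Surjective (NormedSpace.inclusionInDoubleDual ℝ X))
    (hYrefl : Function.Surjective (NormedSpace.inclusionInDoubleDual ℝ Y))
    (A : X →L[ℝ] (Y →L[ℝ] ℝ))
    -- closed convex cones C, K with solid dual cones
    (C : Set X) (K : Set Y)
    (hCcone : ∀ (r : ℝ), 0 ≤ r → ∀ x ∈ C, r • x ∈ C) (hCconv : Convex ℝ C)
    (hCclosed : IsClosed C)
    (hKcone : ∀ (r : ℝ), 0 ≤ r → ∀ y ∈ K, r • y ∈ K) (hKconv : Convex ℝ K)
    (hKclosed : IsClosed K)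
    (Cstar : Set (X →L[ℝ] ℝ)) (hCstar : Cstar = {w : X →L[ℝ] ℝ | ∀ x ∈ C, 0 ≤ w x})
    (Kstar : Set (Y →L[ℝ] ℝ)) (hKstar : Kstar = {z : Y →L[ℝ] ℝ | ∀ y ∈ K, 0 ≤ z y})
    -- data of the programs and consistency
    (c : X →L[ℝ] ℝ) (b : Y →L[ℝ] ℝ)
    (FeasP : Set X) (hFeasP : FeasP = {x | x ∈ C ∧ A x - b ∈ Kstar})
    (FeasD : Set Y) (hFeasD : FeasD = {y | y ∈ K ∧ -(A.flip y) + c ∈ Cstar})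
    (hPne : FeasP.Nonempty) (hDne : FeasD.Nonempty)
    (valP valD : ℝ)
    (hvalP : valP = sInf ((fun x => c x) '' FeasP))
    (hvalD : valD = sSup ((fun y => b y) '' FeasD))
    (SolP : Set X) (hSolP : SolP = {x ∈ FeasP | c x = valP})
    (SolD : Set Y) (hSolD : SolD = {y ∈ FeasD | b y = valD})
    -- the game G = (α,β,A) with α ∈ int C*, β ∈ int K*
    (α : X →L[ℝ] ℝ) (hα : α ∈ interior Cstar)
    (β : Y →L[ℝ] ℝ) (hβ : β ∈ interior Kstar)
    (S : Set X) (hS : S = {x ∈ C | α x = 1})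
    (T : Set Y) (hT : T = {y ∈ K | β y = 1})
    -- finite security levels (F3)
    (hSne : S.Nonempty) (hTne : T.Nonempty)
    (hbb : ∀ x ∈ S, BddBelow ((fun y => A x y) '' T))
    (hba : BddAbove ((fun x => sInf ((fun y => A x y) '' T)) '' S))
    (hba' : ∀ y ∈ T, BddAbove ((fun x => A x y) '' S))
    (hbb' : BddBelow ((fun y => sSup ((fun x => A x y) '' S)) '' T))
    -- v is the value of the game
    (v : ℝ)
    (hv : v = sSup ((fun x => sInf ((fun y => A x y) '' T)) '' S))
    (hv' : v = sInf ((fun y => sSup ((fun x => A x y) '' S)) '' T))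
    -- sets of optimal strategies and the orthogonal complements c^⊥, b^⊥
    (BI : Set X) (hBI : BI = {x ∈ S | sInf ((fun y => A x y) '' T) = v})
    (BII : Set Y) (hBII : BII = {y ∈ T | sSup ((fun x => A x y) '' S) = v})
    (cperp : Set X) (hcperp : cperp = {x : X | c x = 0})
    (bperp : Set Y) (hbperp : bperp = {y : Y | b y = 0})
    -- hypotheses of part (iii): v = 0, B^I ∩ c^⊥ ≠ ∅ and B^II ∩ b^⊥ ≠ ∅
    (hv0 : v = 0)
    (hBIne : (BI ∩ cperp).Nonempty) (hBIIne : (BII ∩ bperp).Nonempty) :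
    -- neither (P) nor (D) is strictly feasible
    (¬ ∃ x ∈ C, A x - b ∈ interior Kstar) ∧
    (¬ ∃ y ∈ K, -(A.flip y) + c ∈ interior Cstar) ∧
    -- additional conclusion under the extra feasibility assumptions
    ((BI ∩ cperp ∩ FeasP).Nonempty → (BII ∩ bperp ∩ FeasD).Nonempty →
      valP = 0 ∧ valD = 0 ∧ (BI ∩ SolP).Nonempty ∧ (BII ∩ SolD).Nonempty) :=
  stmt10_general A C K hCcone hKcone Cstar hCstar Kstar hKstar c b FeasP hFeasP FeasD hFeasD valP
    valD hvalP hvalD SolP hSolP SolD hSolD α hα β hβ S hS T hT hbb hba' v BI hBI BII hBII cperp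
    hcperp bperp hbperp hv0 hBIne hBIIne
end

section
/- Let A : X → Y* be a continuous linear operator, C ⊆ X, K ⊆ Y closed convex cones, and let v be the value of the game G = (α,β,A) for some α ∈ int C*, β ∈ int K*. Then v ≠ 0 if and only if exactly one of the following holds: (i) there exists y ∈ K ∖ {0} such that −A*y ∈ int C*; (ii) there exists x ∈ C ∖ {0} such that Ax ∈ int K*. -/
/-!
If `α ∈ int C*` then `α x ≥ ε‖x‖` on `C`, so every nonzero `x ∈ C` rescales into `S`, and a
functional lies in `int K*` exactly when it is bounded below by a positive constant on `T`
(perturb it by a small multiple of `β`). Hence the lower value `sup_S inf_T A` is positive iff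
`A x ∈ int K*` for some nonzero `x ∈ C`. Applied to the game `(β, α, -A*)`, whose lower value is
`-v`, the same argument gives `v < 0` iff (i); as `v` cannot be both positive and negative,
`v ≠ 0` iff exactly one of (i), (ii) holds.
-/

open Set Topology

section DualCone

variable {E : Type*} [NormedAddCommGroup E] [NormedSpace ℝ E]

def posDual (C : Set E) : Set (E →L[ℝ] ℝ) := {w | ∀ x ∈ C, 0 ≤ w x}

def strategySet (C : Set E) (α : E →L[ℝ] ℝ) : Set E := {x ∈ C | α x = 1}

theorem mem_interior_posDual_iff {C : Set E} {w : E →L[ℝ] ℝ} :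
    w ∈ interior (posDual C) ↔ ∃ ε > 0, ∀ x ∈ C, ε * ‖x‖ ≤ w x := by
  constructor
  · intro hw
    obtain ⟨ε, hε, hball⟩ := Metric.mem_nhds_iff.mp (mem_interior_iff_mem_nhds.mp hw)
    refine ⟨ε / 2, half_pos hε, fun x hx => ?_⟩
    rcases eq_or_ne x 0 with rfl | hx0
    · simp
    obtain ⟨g, hg, hgx⟩ := exists_dual_vector ℝ x (norm_ne_zero_iff.mpr hx0)
    have hmem : w - (ε / 2) • g ∈ Metric.ball w ε := by
      rw [mem_ball_iff_norm, sub_sub_cancel_left, norm_neg, norm_smul, hg, mul_one,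
        Real.norm_of_nonneg (half_pos hε).le]
      exact half_lt_self hε
    have := hball hmem x hx
    simp only [sub_apply, smul_apply, smul_eq_mul, hgx, RCLike.ofReal_real_eq_id, id] at this
    linarith
  · rintro ⟨ε, hε, hw⟩
    refine mem_interior.mpr ⟨Metric.ball w ε, fun z hz x hx => ?_, Metric.isOpen_ball,
      Metric.mem_ball_self hε⟩
    have hzw : ‖z - w‖ ≤ ε := (mem_ball_iff_norm.mp hz).le
    have hdiff : |z x - w x| ≤ ‖z - w‖ * ‖x‖ := (z - w).le_opNorm x
    nlinarith [abs_le.mp hdiff, hw x hx, norm_nonneg x]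

theorem pos_of_mem_interior_posDual {C : Set E} {w : E →L[ℝ] ℝ}
    (hw : w ∈ interior (posDual C)) {x : E} (hx : x ∈ C) (hx0 : x ≠ 0) : 0 < w x := by
  obtain ⟨ε, hε, hwε⟩ := mem_interior_posDual_iff.mp hw
  exact (mul_pos hε (norm_pos_iff.mpr hx0)).trans_le (hwε x hx)

theorem inv_smul_mem_strategySet {C : Set E} (hC : ∀ r : ℝ, 0 ≤ r → ∀ x ∈ C, r • x ∈ C)
    {α : E →L[ℝ] ℝ} {x : E} (hx : x ∈ C) (hαx : 0 < α x) : (α x)⁻¹ • x ∈ strategySet C α :=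
  ⟨hC _ (inv_nonneg.mpr hαx.le) x hx, by simp [hαx.ne']⟩

theorem ne_zero_of_mem_strategySet {C : Set E} {α : E →L[ℝ] ℝ} {x : E}
    (hx : x ∈ strategySet C α) : x ≠ 0 := by
  rintro rfl
  simpa using hx.2

theorem mem_interior_posDual_iff_exists_pos_le {C : Set E}
    (hC : ∀ r : ℝ, 0 ≤ r → ∀ x ∈ C, r • x ∈ C) {α : E →L[ℝ] ℝ} (hα : α ∈ interior (posDual C))
    {w : E →L[ℝ] ℝ} :
    w ∈ interior (posDual C) ↔ ∃ m > 0, ∀ x ∈ strategySet C α, m ≤ w x := by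
  constructor
  · intro hw
    have hcont : Continuous fun t : ℝ => w - t • α := by fun_prop
    have : ∀ᶠ t in 𝓝 (0 : ℝ), w - t • α ∈ posDual C :=
      hcont.continuousAt.eventually_mem (by simpa using mem_interior_iff_mem_nhds.mp hw)
    obtain ⟨t, ht, hwt⟩ := this.exists_gt
    refine ⟨t, ht, fun x hx => ?_⟩
    simpa [hx.2] using hwt x hx.1
  · rintro ⟨m, hm, hmw⟩
    obtain ⟨ε, hε, hαε⟩ := mem_interior_posDual_iff.mp hα
    refine mem_interior_posDual_iff.mpr ⟨m * ε, mul_pos hm hε, fun x hx => ?_⟩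
    rcases eq_or_ne x 0 with rfl | hx0
    · simp
    have hαx := pos_of_mem_interior_posDual hα hx hx0
    have hscaled : m ≤ (α x)⁻¹ * w x := by
      simpa using hmw _ (inv_smul_mem_strategySet hC hx hαx)
    have hmα : m * α x ≤ w x := by
      rwa [← div_eq_inv_mul, le_div_iff₀ hαx] at hscaled
    nlinarith [hαε x hx]

end DualCone

theorem image_neg_eq_neg_image {ι : Type*} (f : ι → ℝ) (s : Set ι) :
    (fun i => -f i) '' s = -(f '' s) := by
  rw [← image_neg_eq_neg, image_image]

theorem sInf_image_neg {ι : Type*} (f : ι → ℝ) (s : Set ι) :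
    sInf ((fun i => -f i) '' s) = -sSup (f '' s) := by
  rw [image_neg_eq_neg_image, Real.sInf_neg]

theorem sSup_image_neg {ι : Type*} (f : ι → ℝ) (s : Set ι) :
    sSup ((fun i => -f i) '' s) = -sInf (f '' s) := by
  rw [image_neg_eq_neg_image, Real.sSup_neg]

theorem ne_zero_iff_xor_neg_pos {v : ℝ} : v ≠ 0 ↔ Xor (v < 0) (0 < v) := by
  rw [xor_iff_or_and_not_and, ne_iff_lt_or_gt]
  exact ⟨fun h => ⟨h, fun h' => lt_asymm h'.1 h'.2⟩, And.left⟩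

section Game

variable {E F : Type*} [NormedAddCommGroup E] [NormedSpace ℝ E] [NormedAddCommGroup F]
  [NormedSpace ℝ F]

theorem zero_lt_sSup_sInf_iff (B : E →L[ℝ] F →L[ℝ] ℝ) {P : Set E} {Q : Set F}
    (hP : ∀ r : ℝ, 0 ≤ r → ∀ x ∈ P, r • x ∈ P) (hQ : ∀ r : ℝ, 0 ≤ r → ∀ y ∈ Q, r • y ∈ Q)
    {α : E →L[ℝ] ℝ} (hα : α ∈ interior (posDual P))
    {β : F →L[ℝ] ℝ} (hβ : β ∈ interior (posDual Q))
    (hS : (strategySet P α).Nonempty) (hT : (strategySet Q β).Nonempty)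
    (hbb : ∀ x ∈ strategySet P α, BddBelow ((fun y => B x y) '' strategySet Q β))
    (hba : BddAbove ((fun x => sInf ((fun y => B x y) '' strategySet Q β)) '' strategySet P α)) :
    0 < sSup ((fun x => sInf ((fun y => B x y) '' strategySet Q β)) '' strategySet P α) ↔
      ∃ x ∈ P, x ≠ 0 ∧ B x ∈ interior (posDual Q) := by
  rw [lt_csSup_iff hba (hS.image _), exists_mem_image]
  constructor
  · rintro ⟨x, hx, hpos⟩
    refine ⟨x, hx.1, ne_zero_of_mem_strategySet hx,
      (mem_interior_posDual_iff_exists_pos_le hQ hβ).mpr ⟨_, hpos, fun y hy => ?_⟩⟩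
    exact csInf_le (hbb x hx) (mem_image_of_mem _ hy)
  · rintro ⟨x, hx, hx0, hBx⟩
    obtain ⟨m, hm, hmB⟩ := (mem_interior_posDual_iff_exists_pos_le hQ hβ).mp hBx
    have hαx := pos_of_mem_interior_posDual hα hx hx0
    refine ⟨_, inv_smul_mem_strategySet hP hx hαx,
      (mul_pos (inv_pos.mpr hαx) hm).trans_le (le_csInf (hT.image _) ?_)⟩
    rintro _ ⟨y, hy, rfl⟩
    simpa using mul_le_mul_of_nonneg_left (hmB y hy) (inv_pos.mpr hαx).le

theorem sSup_sInf_neg_flip (B : E →L[ℝ] F →L[ℝ] ℝ) (S : Set E) (T : Set F) :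
    sSup ((fun y => sInf ((fun x => (-B.flip) y x) '' S)) '' T) =
      -sInf ((fun y => sSup ((fun x => B x y) '' S)) '' T) := by
  simp only [neg_apply, ContinuousLinearMap.flip_apply, sInf_image_neg, sSup_image_neg]

end Game

theorem stmt11_general
    {X Y : Type*} [NormedAddCommGroup X] [NormedSpace ℝ X]
    [NormedAddCommGroup Y] [NormedSpace ℝ Y]
    (A : X →L[ℝ] (Y →L[ℝ] ℝ))
    -- closed convex cones C, K with solid dual cones
    (C : Set X) (K : Set Y)
    (hCcone : ∀ (r : ℝ), 0 ≤ r → ∀ x ∈ C, r • x ∈ C)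
    (hKcone : ∀ (r : ℝ), 0 ≤ r → ∀ y ∈ K, r • y ∈ K)
    (Cstar : Set (X →L[ℝ] ℝ)) (hCstar : Cstar = {w : X →L[ℝ] ℝ | ∀ x ∈ C, 0 ≤ w x})
    (Kstar : Set (Y →L[ℝ] ℝ)) (hKstar : Kstar = {z : Y →L[ℝ] ℝ | ∀ y ∈ K, 0 ≤ z y})
    -- the game G = (α,β,A) with α ∈ int C*, β ∈ int K*
    (α : X →L[ℝ] ℝ) (hα : α ∈ interior Cstar)
    (β : Y →L[ℝ] ℝ) (hβ : β ∈ interior Kstar)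
    (S : Set X) (hS : S = {x ∈ C | α x = 1})
    (T : Set Y) (hT : T = {y ∈ K | β y = 1})
    -- finite security levels (F3)
    (hSne : S.Nonempty) (hTne : T.Nonempty)
    (hbb : ∀ x ∈ S, BddBelow ((fun y => A x y) '' T))
    (hba : BddAbove ((fun x => sInf ((fun y => A x y) '' T)) '' S))
    (hba' : ∀ y ∈ T, BddAbove ((fun x => A x y) '' S))
    (hbb' : BddBelow ((fun y => sSup ((fun x => A x y) '' S)) '' T))
    -- v is the value of the game
    (v : ℝ)
    (hv : v = sSup ((fun x => sInf ((fun y => A x y) '' T)) '' S))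
    (hv' : v = sInf ((fun y => sSup ((fun x => A x y) '' S)) '' T)) :
    v ≠ 0 ↔
      Xor' (∃ y ∈ K, y ≠ 0 ∧ -(A.flip y) ∈ interior Cstar)
           (∃ x ∈ C, x ≠ 0 ∧ A x ∈ interior Kstar) := by
  obtain rfl : Cstar = posDual C := hCstar
  obtain rfl : Kstar = posDual K := hKstar
  obtain rfl : S = strategySet C α := hS
  obtain rfl : T = strategySet K β := hT
  have hpos : 0 < v ↔ ∃ x ∈ C, x ≠ 0 ∧ A x ∈ interior (posDual K) :=
    hv ▸ zero_lt_sSup_sInf_iff A hCcone hKcone hα hβ hSne hTne hbb hba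
  have hneg : v < 0 ↔ ∃ y ∈ K, y ≠ 0 ∧ -(A.flip y) ∈ interior (posDual C) := by
    have hflip_bb : ∀ y ∈ strategySet K β,
        BddBelow ((fun x => (-A.flip) y x) '' strategySet C α) := fun y hy => by
      simpa [image_neg_eq_neg_image, bddBelow_neg] using hba' y hy
    have hflip_ba : BddAbove ((fun y => sInf ((fun x => (-A.flip) y x) '' strategySet C α)) ''
        strategySet K β) := by
      simpa [sInf_image_neg, image_neg_eq_neg_image, bddAbove_neg] using hbb'
    rw [← neg_pos, hv', ← sSup_sInf_neg_flip]
    exact zero_lt_sSup_sInf_iff (-A.flip) hKcone hCcone hβ hα hTne hSne hflip_bb hflip_ba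
  rw [ne_zero_iff_xor_neg_pos, hneg, hpos]
  rfl

/-- Lemma 4.2: the game G = (α,β,A) has value v ≠ 0 iff exactly one of
(i) ∃ y ∈ K ∖ {0} with −A*y ∈ int C*, (ii) ∃ x ∈ C ∖ {0} with Ax ∈ int K* holds. -/
theorem stmt11
    {X Y : Type*} [NormedAddCommGroup X] [NormedSpace ℝ X] [CompleteSpace X]
    [NormedAddCommGroup Y] [NormedSpace ℝ Y] [CompleteSpace Y]
    -- reflexivity of X and Y
    (hXrefl : Function.Surjective (NormedSpace.inclusionInDoubleDual ℝ X))
    (hYrefl : Function.Surjective (NormedSpace.inclusionInDoubleDual ℝ Y))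
    (A : X →L[ℝ] (Y →L[ℝ] ℝ))
    -- closed convex cones C, K with solid dual cones
    (C : Set X) (K : Set Y)
    (hCcone : ∀ (r : ℝ), 0 ≤ r → ∀ x ∈ C, r • x ∈ C) (hCconv : Convex ℝ C)
    (hCclosed : IsClosed C)
    (hKcone : ∀ (r : ℝ), 0 ≤ r → ∀ y ∈ K, r • y ∈ K) (hKconv : Convex ℝ K)
    (hKclosed : IsClosed K)
    (Cstar : Set (X →L[ℝ] ℝ)) (hCstar : Cstar = {w : X →L[ℝ] ℝ | ∀ x ∈ C, 0 ≤ w x})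
    (Kstar : Set (Y →L[ℝ] ℝ)) (hKstar : Kstar = {z : Y →L[ℝ] ℝ | ∀ y ∈ K, 0 ≤ z y})
    -- the game G = (α,β,A) with α ∈ int C*, β ∈ int K*
    (α : X →L[ℝ] ℝ) (hα : α ∈ interior Cstar)
    (β : Y →L[ℝ] ℝ) (hβ : β ∈ interior Kstar)
    (S : Set X) (hS : S = {x ∈ C | α x = 1})
    (T : Set Y) (hT : T = {y ∈ K | β y = 1})
    -- finite security levels (F3)
    (hSne : S.Nonempty) (hTne : T.Nonempty)
    (hbb : ∀ x ∈ S, BddBelow ((fun y => A x y) '' T))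
    (hba : BddAbove ((fun x => sInf ((fun y => A x y) '' T)) '' S))
    (hba' : ∀ y ∈ T, BddAbove ((fun x => A x y) '' S))
    (hbb' : BddBelow ((fun y => sSup ((fun x => A x y) '' S)) '' T))
    -- v is the value of the game
    (v : ℝ)
    (hv : v = sSup ((fun x => sInf ((fun y => A x y) '' T)) '' S))
    (hv' : v = sInf ((fun y => sSup ((fun x => A x y) '' S)) '' T)) :
    v ≠ 0 ↔
      Xor' (∃ y ∈ K, y ≠ 0 ∧ -(A.flip y) ∈ interior Cstar)
           (∃ x ∈ C, x ≠ 0 ∧ A x ∈ interior Kstar) :=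
  stmt11_general A C K hCcone hKcone Cstar hCstar Kstar hKstar α hα β hβ S hS T hT hSne hTne hbb hba
    hba' hbb' v hv hv'
end

section
/- Assume the primal-dual pair {(P),(D)} (with data c ∈ X*, b ∈ Y*) is consistent and the value v of the game G = (α,β,A) (for some α ∈ int C*, β ∈ int K*) equals 0. Then (P) is strictly feasible if and only if every y ∈ T with −A*y ∈ C* satisfies ⟨y,b⟩ < 0, where T := {y ∈ K : ⟨y,β⟩ = 1}. -/
/-!
If `x ∈ C` is strictly feasible and `y ∈ T` satisfies `-A*y ∈ C*`, then `⟨y, Ax - b⟩ > 0` because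
functionals in `int K*` are strictly positive on `K \ {0}`, while `⟨y, Ax⟩ ≤ 0`; hence `⟨y, b⟩ < 0`.

Conversely, if no `x ∈ C` has `Ax - b ∈ int K*`, Hahn–Banach separates the convex set
`{Ax - b : x ∈ C}` from the open convex cone `int K*` by a nonzero functional on `Y*`. By
reflexivity it is evaluation at some `-y`, and the cone structure makes it nonpositive on `K*` and
nonnegative on the other set. So `y ∈ K` (bipolar theorem), `⟨y, Ax⟩ ≤ 0` on `C`, and
`⟨y, b⟩ ≥ 0`; dividing `y` by `⟨y, β⟩ > 0` puts it in `T`.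
-/

open Filter Topology ContinuousLinearMap

lemma zero_mem_of_smul_mem {M : Type*} [AddCommGroup M] [Module ℝ M] {K : Set M}
    (hK : ∀ r : ℝ, 0 ≤ r → ∀ x ∈ K, r • x ∈ K) (hne : K.Nonempty) : (0 : M) ∈ K := by
  obtain ⟨x, hx⟩ := hne
  simpa using hK 0 le_rfl x hx

lemma map_nonpos_of_le_of_smul_mem {M F : Type*} [AddCommGroup M] [Module ℝ M] [FunLike F M ℝ]
    [LinearMapClass F ℝ M ℝ] {K : Set M} (hK : ∀ r : ℝ, 0 ≤ r → ∀ x ∈ K, r • x ∈ K)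
    {f : F} {u : ℝ} (hf : ∀ x ∈ K, f x ≤ u) {x : M} (hx : x ∈ K) : f x ≤ 0 := by
  by_contra! hfx
  have := hf (((|u| + 1) / f x) • x) (hK _ (by positivity) x hx)
  rw [map_smul, smul_eq_mul, div_mul_cancel₀ _ hfx.ne'] at this
  linarith [le_abs_self u]

section NormedSpace

variable {E : Type*} [NormedAddCommGroup E] [NormedSpace ℝ E]

lemma pos_of_mem_interior_dual_s12 {K : Set E} {z : E →L[ℝ] ℝ}
    (hz : z ∈ interior {z : E →L[ℝ] ℝ | ∀ y ∈ K, 0 ≤ z y}) {y : E} (hy : y ∈ K) (hy0 : y ≠ 0) :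
    0 < z y := by
  obtain ⟨g, -, hgy⟩ := exists_dual_vector'' ℝ y
  have hcont : Continuous fun t : ℝ => z - t • g := by fun_prop
  have hnhds : ∀ᶠ t in 𝓝[>] (0 : ℝ), z - t • g ∈ interior {z : E →L[ℝ] ℝ | ∀ y ∈ K, 0 ≤ z y} :=
    nhdsWithin_le_nhds (hcont.tendsto' 0 z (by simp) (isOpen_interior.mem_nhds hz))
  obtain ⟨t, ht, ht0⟩ := (hnhds.and self_mem_nhdsWithin).exists
  have := interior_subset ht y hy
  simp only [sub_apply, smul_apply, hgy, Real.ringHom_apply, smul_eq_mul, sub_nonneg] at this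
  nlinarith [norm_pos_iff.2 hy0]

lemma mem_of_forall_dual_nonneg {K : Set E} (hK : ∀ r : ℝ, 0 ≤ r → ∀ x ∈ K, r • x ∈ K)
    (hKconv : Convex ℝ K) (hKclosed : IsClosed K) (hKne : K.Nonempty) {y : E}
    (hy : ∀ z : E →L[ℝ] ℝ, (∀ k ∈ K, 0 ≤ z k) → 0 ≤ z y) : y ∈ K := by
  by_contra hyK
  obtain ⟨φ, s, hφK, hφy⟩ := geometric_hahn_banach_closed_point hKconv hKclosed hyK
  have hs : 0 < s := by simpa using hφK 0 (zero_mem_of_smul_mem hK hKne)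
  have := hy (-φ) fun k hk => by
    simpa using map_nonpos_of_le_of_smul_mem hK (fun x hx => (hφK x hx).le) hk
  simp only [neg_apply, Left.nonneg_neg_iff] at this
  linarith

lemma PointedCone.exists_separating_of_disjoint_interior (D : PointedCone ℝ E)
    (hDint : (interior (D : Set E)).Nonempty) {M : Set E} (hMconv : Convex ℝ M)
    (hMne : M.Nonempty) (hDM : Disjoint (interior (D : Set E)) M) :
    ∃ f : E →L[ℝ] ℝ, f ≠ 0 ∧ (∀ z ∈ D, f z ≤ 0) ∧ ∀ m ∈ M, 0 ≤ f m := by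
  obtain ⟨f, u, hf0, hfD, hfM⟩ :=
    geometric_hahn_banach_of_nonempty_interior D.convex hMconv hDM hDint hMne
  have hu : 0 ≤ u := by simpa using hfD 0 D.zero_mem
  refine ⟨f, hf0, fun z hz => ?_, fun m hm => hu.trans (hfM m hm)⟩
  exact map_nonpos_of_le_of_smul_mem (fun r hr z hz => D.smul_mem hr hz) hfD hz

end NormedSpace

lemma exists_dual_certificate_of_forall_notMem_interior
    {X Y : Type*} [NormedAddCommGroup X] [NormedSpace ℝ X]
    [NormedAddCommGroup Y] [NormedSpace ℝ Y]
    (hYrefl : Function.Surjective (NormedSpace.inclusionInDoubleDual ℝ Y))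
    {C : Set X} (hC : ∀ r : ℝ, 0 ≤ r → ∀ x ∈ C, r • x ∈ C) (hCconv : Convex ℝ C)
    (hCne : C.Nonempty)
    {K : Set Y} (hK : ∀ r : ℝ, 0 ≤ r → ∀ y ∈ K, r • y ∈ K) (hKconv : Convex ℝ K)
    (hKclosed : IsClosed K) (hKne : K.Nonempty)
    (hint : (interior {z : Y →L[ℝ] ℝ | ∀ y ∈ K, 0 ≤ z y}).Nonempty)
    (A : X →L[ℝ] (Y →L[ℝ] ℝ)) (b : Y →L[ℝ] ℝ)
    (h : ∀ x ∈ C, A x - b ∉ interior {z : Y →L[ℝ] ℝ | ∀ y ∈ K, 0 ≤ z y}) :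
    ∃ y ∈ K, y ≠ 0 ∧ (∀ x ∈ C, A x y ≤ 0) ∧ 0 ≤ b y := by
  have hM : Convex ℝ ((fun x => A x - b) '' C) := by
    simpa [Set.image_image, sub_eq_neg_add] using (hCconv.linear_image A).translate (-b)
  -- `K*` is the dual `PointedCone` for the evaluation pairing, whose carrier is defeq to
  -- `{z | ∀ y ∈ K, 0 ≤ z y}`; this lets `hint` and `h` be passed unchanged.
  obtain ⟨f, hf0, hfK, hfM⟩ :=
    (PointedCone.dual (topDualPairing ℝ Y).flip K).exists_separating_of_disjoint_interior hint hM
      (hCne.image _) (Set.disjoint_right.2 <| by rintro _ ⟨x, hx, rfl⟩; exact h x hx)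
  obtain ⟨y, hy⟩ := hYrefl (-f)
  have hyf : ∀ z : Y →L[ℝ] ℝ, z y = -f z := fun z => by simpa using DFunLike.congr_fun hy z
  have hyK : y ∈ K := mem_of_forall_dual_nonneg hK hKconv hKclosed hKne fun z hz => by
    linarith [hyf z, hfK z hz]
  have hAb : ∀ x ∈ C, A x y ≤ b y := fun x hx => by
    have : (A x - b) y ≤ 0 := by linarith [hyf (A x - b), hfM _ ⟨x, hx, rfl⟩]
    rwa [sub_apply, sub_nonpos] at this
  refine ⟨y, hyK, ?_, fun x hx => map_nonpos_of_le_of_smul_mem hC (f := A.flip y) hAb hx, ?_⟩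
  · rintro rfl
    exact hf0 (ext fun z => by simpa using (hyf z).symm)
  · simpa using hAb 0 (zero_mem_of_smul_mem hC hCne)

theorem stmt12_general
    {X Y : Type*} [NormedAddCommGroup X] [NormedSpace ℝ X]
    [NormedAddCommGroup Y] [NormedSpace ℝ Y]
    -- reflexivity of X and Y
    (hYrefl : Function.Surjective (NormedSpace.inclusionInDoubleDual ℝ Y))
    (A : X →L[ℝ] (Y →L[ℝ] ℝ))
    -- closed convex cones C, K with solid dual cones
    (C : Set X) (K : Set Y)
    (hCcone : ∀ (r : ℝ), 0 ≤ r → ∀ x ∈ C, r • x ∈ C) (hCconv : Convex ℝ C)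
    (hKcone : ∀ (r : ℝ), 0 ≤ r → ∀ y ∈ K, r • y ∈ K) (hKconv : Convex ℝ K)
    (hKclosed : IsClosed K)
    (Cstar : Set (X →L[ℝ] ℝ)) (hCstar : Cstar = {w : X →L[ℝ] ℝ | ∀ x ∈ C, 0 ≤ w x})
    (Kstar : Set (Y →L[ℝ] ℝ)) (hKstar : Kstar = {z : Y →L[ℝ] ℝ | ∀ y ∈ K, 0 ≤ z y})
    -- data of the programs and consistency
    (c : X →L[ℝ] ℝ) (b : Y →L[ℝ] ℝ)
    (FeasP : Set X) (hFeasP : FeasP = {x | x ∈ C ∧ A x - b ∈ Kstar})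
    (FeasD : Set Y) (hFeasD : FeasD = {y | y ∈ K ∧ -(A.flip y) + c ∈ Cstar})
    (hPne : FeasP.Nonempty) (hDne : FeasD.Nonempty)
    -- the game G = (α,β,A) with α ∈ int C*, β ∈ int K*
    (β : Y →L[ℝ] ℝ) (hβ : β ∈ interior Kstar)
    (T : Set Y) (hT : T = {y ∈ K | β y = 1}) :
    ((∃ x ∈ C, A x - b ∈ interior Kstar) ↔
      (∀ y ∈ T, -(A.flip y) ∈ Cstar → b y < 0)) := by
  obtain ⟨x₀, hx₀C, -⟩ := hFeasP ▸ hPne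
  obtain ⟨y₀, hy₀K, -⟩ := hFeasD ▸ hDne
  subst hCstar hKstar hT
  constructor
  · rintro ⟨x, hxC, hx⟩ y ⟨hyK, hβy⟩ hAy
    have hpos := pos_of_mem_interior_dual_s12 hx hyK (by rintro rfl; simp at hβy)
    have hAxy := hAy x hxC
    simp only [sub_apply, sub_pos, neg_apply, flip_apply, Left.nonneg_neg_iff] at hpos hAxy
    linarith
  · intro hdual
    by_contra! hprimal
    obtain ⟨y, hyK, hy0, hAy, hby⟩ := exists_dual_certificate_of_forall_notMem_interior hYrefl
      hCcone hCconv ⟨x₀, hx₀C⟩ hKcone hKconv hKclosed ⟨y₀, hy₀K⟩ ⟨β, hβ⟩ A b hprimal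
    have hβy := pos_of_mem_interior_dual_s12 hβ hyK hy0
    refine (hdual ((β y)⁻¹ • y) ⟨hKcone _ (inv_nonneg.2 hβy.le) y hyK, by simp [hβy.ne']⟩
      fun x hx => ?_).not_ge ?_
    · simpa using mul_nonneg (inv_nonneg.2 hβy.le) (neg_nonneg.2 (hAy x hx))
    · simpa using mul_nonneg (inv_nonneg.2 hβy.le) hby

/-- Lemma 4.3, relation (4.4): if {(P),(D)} is consistent and the game
G = (α,β,A) has value v = 0, then (P) is strictly feasible iff every y ∈ T with
−A*y ∈ C* satisfies ⟨y,b⟩ < 0. -/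
theorem stmt12
    {X Y : Type*} [NormedAddCommGroup X] [NormedSpace ℝ X] [CompleteSpace X]
    [NormedAddCommGroup Y] [NormedSpace ℝ Y] [CompleteSpace Y]
    -- reflexivity of X and Y
    (hXrefl : Function.Surjective (NormedSpace.inclusionInDoubleDual ℝ X))
    (hYrefl : Function.Surjective (NormedSpace.inclusionInDoubleDual ℝ Y))
    (A : X →L[ℝ] (Y →L[ℝ] ℝ))
    -- closed convex cones C, K with solid dual cones
    (C : Set X) (K : Set Y)
    (hCcone : ∀ (r : ℝ), 0 ≤ r → ∀ x ∈ C, r • x ∈ C) (hCconv : Convex ℝ C)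
    (hCclosed : IsClosed C)
    (hKcone : ∀ (r : ℝ), 0 ≤ r → ∀ y ∈ K, r • y ∈ K) (hKconv : Convex ℝ K)
    (hKclosed : IsClosed K)
    (Cstar : Set (X →L[ℝ] ℝ)) (hCstar : Cstar = {w : X →L[ℝ] ℝ | ∀ x ∈ C, 0 ≤ w x})
    (Kstar : Set (Y →L[ℝ] ℝ)) (hKstar : Kstar = {z : Y →L[ℝ] ℝ | ∀ y ∈ K, 0 ≤ z y})
    -- data of the programs and consistency
    (c : X →L[ℝ] ℝ) (b : Y →L[ℝ] ℝ)
    (FeasP : Set X) (hFeasP : FeasP = {x | x ∈ C ∧ A x - b ∈ Kstar})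
    (FeasD : Set Y) (hFeasD : FeasD = {y | y ∈ K ∧ -(A.flip y) + c ∈ Cstar})
    (hPne : FeasP.Nonempty) (hDne : FeasD.Nonempty)
    -- the game G = (α,β,A) with α ∈ int C*, β ∈ int K*
    (α : X →L[ℝ] ℝ) (hα : α ∈ interior Cstar)
    (β : Y →L[ℝ] ℝ) (hβ : β ∈ interior Kstar)
    (S : Set X) (hS : S = {x ∈ C | α x = 1})
    (T : Set Y) (hT : T = {y ∈ K | β y = 1})
    -- finite security levels (F3)
    (hSne : S.Nonempty) (hTne : T.Nonempty)
    (hbb : ∀ x ∈ S, BddBelow ((fun y => A x y) '' T))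
    (hba : BddAbove ((fun x => sInf ((fun y => A x y) '' T)) '' S))
    (hba' : ∀ y ∈ T, BddAbove ((fun x => A x y) '' S))
    (hbb' : BddBelow ((fun y => sSup ((fun x => A x y) '' S)) '' T))
    -- v is the value of the game
    (v : ℝ)
    (hv : v = sSup ((fun x => sInf ((fun y => A x y) '' T)) '' S))
    (hv' : v = sInf ((fun y => sSup ((fun x => A x y) '' S)) '' T))
    -- hypothesis: the game value is 0
    (hv0 : v = 0) :
    ((∃ x ∈ C, A x - b ∈ interior Kstar) ↔
      (∀ y ∈ T, -(A.flip y) ∈ Cstar → b y < 0)) :=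
  stmt12_general hYrefl A C K hCcone hCconv hKcone hKconv hKclosed Cstar hCstar Kstar hKstar c b
    FeasP hFeasP FeasD hFeasD hPne hDne β hβ T hT
end

section
/- Assume the primal-dual pair {(P),(D)} (with data c ∈ X*, b ∈ Y*) is consistent and the value v of the game G = (α,β,A) (for some α ∈ int C*, β ∈ int K*) equals 0. Then the sets S ∩ {x ∈ X : Ax ∈ K*} and T ∩ {y ∈ Y : −A*y ∈ C*} are nonempty; moreover, every x ∈ S with Ax ∈ K* satisfies ⟨c,x⟩ ≥ 0, and every y ∈ T with −A*y ∈ C* satisfies ⟨y,b⟩ ≤ 0. -/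
/-!
The value of the game is attained on both sides: the strategy sets are closed, convex and (since
`α` and `β` are interior points of the dual cones) bounded, hence weakly compact in the reflexive
spaces, and `x ↦ inf_y ⟨y, Ax⟩` is an infimum of weakly continuous functions. An optimal `x` has
`⟨y, Ax⟩ ≥ v = 0` for all `y ∈ T`, and since `T` is a base of the cone `K`, `Ax ∈ K*`; dually for
an optimal `y`. The sign conditions on `⟨c,x⟩` and `⟨y,b⟩` are weak duality against a dual,
resp. primal, feasible point.
-/

open NormedSpace Set Metric

section DualCone

variable {E : Type*} [NormedAddCommGroup E] [NormedSpace ℝ E]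

theorem exists_pos_mul_norm_le_of_mem_interior_dualCone {C : Set E} {α : StrongDual ℝ E}
    (hα : α ∈ interior {w : StrongDual ℝ E | ∀ x ∈ C, 0 ≤ w x}) :
    ∃ ε > 0, ∀ x ∈ C, ε * ‖x‖ ≤ α x := by
  obtain ⟨ε, hε, hball⟩ := Metric.mem_nhds_iff.mp (mem_interior_iff_mem_nhds.mp hα)
  refine ⟨ε / 2, half_pos hε, fun x hx => ?_⟩
  rcases eq_or_ne x 0 with rfl | hx0
  · simp
  obtain ⟨g, hg, hgx⟩ := exists_dual_vector ℝ x (norm_ne_zero_iff.mpr hx0)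
  have hmem : α - (ε / 2) • g ∈ ball α ε := by
    rw [mem_ball, dist_eq_norm, sub_sub_cancel_left, norm_neg, norm_smul, hg,
      Real.norm_of_nonneg (half_pos hε).le]
    linarith
  have := hball hmem x hx
  simp only [sub_apply, smul_apply, smul_eq_mul, hgx,
    RCLike.ofReal_real_eq_id, id] at this
  linarith

theorem convex_inter_level {C : Set E} (hC : Convex ℝ C) (α : StrongDual ℝ E) (r : ℝ) :
    Convex ℝ {x ∈ C | α x = r} :=
  hC.inter (convex_hyperplane α.isLinear r)

theorem isClosed_inter_level {C : Set E} (hC : IsClosed C) (α : StrongDual ℝ E) (r : ℝ) :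
    IsClosed {x ∈ C | α x = r} :=
  hC.inter (isClosed_eq α.continuous continuous_const)

theorem isBounded_inter_level_of_mul_norm_le {C : Set E} {α : StrongDual ℝ E} {ε : ℝ}
    (hε : 0 < ε) (hα : ∀ x ∈ C, ε * ‖x‖ ≤ α x) (r : ℝ) :
    Bornology.IsBounded {x ∈ C | α x = r} := by
  refine isBounded_iff_forall_norm_le.mpr ⟨r / ε, fun x ⟨hxC, hxr⟩ => ?_⟩
  rw [le_div_iff₀ hε, mul_comm, ← hxr]
  exact hα x hxC

theorem pos_of_mul_norm_le {C : Set E} {α : StrongDual ℝ E} {ε : ℝ} (hε : 0 < ε)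
    (hα : ∀ x ∈ C, ε * ‖x‖ ≤ α x) {x : E} (hx : x ∈ C) (hx0 : x ≠ 0) : 0 < α x :=
  (mul_pos hε (norm_pos_iff.mpr hx0)).trans_le (hα x hx)

theorem nonneg_of_nonneg_on_inter_level_one {K : Set E}
    (hK : ∀ r : ℝ, 0 ≤ r → ∀ y ∈ K, r • y ∈ K) {β : StrongDual ℝ E}
    (hβ : ∀ y ∈ K, y ≠ 0 → 0 < β y) {z : StrongDual ℝ E}
    (hz : ∀ y ∈ {y ∈ K | β y = 1}, 0 ≤ z y) {y : E} (hy : y ∈ K) : 0 ≤ z y := by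
  rcases eq_or_ne y 0 with rfl | hy0
  · simp
  have hβy := hβ y hy hy0
  have hslice : (β y)⁻¹ • y ∈ {y ∈ K | β y = 1} :=
    ⟨hK _ (inv_nonneg.mpr hβy.le) y hy, by rw [map_smul, smul_eq_mul, inv_mul_cancel₀ hβy.ne']⟩
  have := hz _ hslice
  rw [map_smul, smul_eq_mul] at this
  exact nonneg_of_mul_nonneg_right this (inv_pos.mpr hβy)

end DualCone

section Reflexive

variable {E : Type*} [NormedAddCommGroup E] [NormedSpace ℝ E]

noncomputable def toWeakBidual (x : E) : WeakDual ℝ (StrongDual ℝ E) :=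
  StrongDual.toWeakDual (inclusionInDoubleDual ℝ E x)

variable (hE : Function.Surjective (inclusionInDoubleDual ℝ E)) {S : Set E}
include hE

theorem isClosed_image_toWeakBidual (hconv : Convex ℝ S) (hclosed : IsClosed S) :
    IsClosed (toWeakBidual '' S) := by
  refine isOpen_compl_iff.mp (isOpen_iff_mem_nhds.mpr fun ψ hψ => ?_)
  obtain ⟨x, hx⟩ := hE (WeakDual.toStrongDual ψ)
  have hψx : ψ = toWeakBidual x := by rw [toWeakBidual, hx]; rfl
  have hxS : x ∉ S := fun h => hψ ⟨x, h, hψx.symm⟩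
  obtain ⟨f, u, hfS, hfx⟩ := geometric_hahn_banach_closed_point hconv hclosed hxS
  have hopen : IsOpen {φ : WeakDual ℝ (StrongDual ℝ E) | u < φ f} :=
    isOpen_Ioi.preimage (WeakDual.eval_continuous f)
  refine Filter.mem_of_superset (hopen.mem_nhds (by rwa [hψx])) ?_
  rintro φ hφ ⟨a, haS, rfl⟩
  exact (hfS a haS).not_gt hφ

/-- Kakutani: bounded closed convex sets of a reflexive space are weakly compact. -/
theorem isCompact_image_toWeakBidual (hconv : Convex ℝ S) (hclosed : IsClosed S)
    (hbdd : Bornology.IsBounded S) : IsCompact (toWeakBidual '' S) := by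
  obtain ⟨R, hR⟩ := hbdd.subset_closedBall 0
  refine (WeakDual.isCompact_closedBall (0 : StrongDual ℝ (StrongDual ℝ E)) R).of_isClosed_subset
    (isClosed_image_toWeakBidual hE hconv hclosed) ?_
  rintro _ ⟨x, hx, rfl⟩
  rw [mem_preimage, mem_closedBall_zero_iff]
  exact (double_dual_bound ℝ E x).trans (mem_closedBall_zero_iff.mp (hR hx))

theorem exists_forall_le_of_forall_sub_le (hconv : Convex ℝ S) (hclosed : IsClosed S)
    (hbdd : Bornology.IsBounded S) {ι : Type*} (F : ι → StrongDual ℝ E) (m : ℝ)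
    (happrox : ∀ ε > 0, ∃ x ∈ S, ∀ i, m - ε ≤ F i x) : ∃ x ∈ S, ∀ i, m ≤ F i x := by
  have hcomp := isCompact_image_toWeakBidual hE hconv hclosed hbdd
  let t : {ε : ℝ // 0 < ε} → Set (WeakDual ℝ (StrongDual ℝ E)) :=
    fun ε => toWeakBidual '' S ∩ ⋂ i, {ψ | m - ε ≤ ψ (F i)}
  have htcl (ε) : IsClosed (t ε) :=
    hcomp.isClosed.inter <| isClosed_iInter fun i =>
      isClosed_le continuous_const (WeakDual.eval_continuous (F i))
  have htmono : Monotone t := fun ε ε' hεε' =>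
    inter_subset_inter_right _ <| iInter_mono fun i ψ hψ =>
      (sub_le_sub_left (Subtype.coe_le_coe.mpr hεε') m).trans hψ
  have htne (ε : {ε : ℝ // 0 < ε}) : (t ε).Nonempty := by
    obtain ⟨x, hxS, hx⟩ := happrox ε ε.2
    exact ⟨toWeakBidual x, mem_image_of_mem _ hxS, mem_iInter.mpr hx⟩
  have : Nonempty {ε : ℝ // 0 < ε} := ⟨⟨1, one_pos⟩⟩
  obtain ⟨ψ, hψ⟩ := IsCompact.nonempty_iInter_of_directed_nonempty_isCompact_isClosed t
    htmono.directed_ge htne (fun ε => hcomp.of_isClosed_subset (htcl ε) inter_subset_left) htcl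
  rw [mem_iInter] at hψ
  obtain ⟨x, hxS, rfl⟩ := (hψ ⟨1, one_pos⟩).1
  exact ⟨x, hxS, fun i => le_of_forall_sub_le fun ε hε => mem_iInter.mp (hψ ⟨ε, hε⟩).2 i⟩

end Reflexive

section SaddleValue

variable {ι κ : Type*} {S : Set ι} {T : Set κ}

theorem exists_forall_sSup_sInf_sub_le (f : ι → κ → ℝ) (hS : S.Nonempty)
    (hbdd : ∀ x ∈ S, BddBelow (f x '' T)) {ε : ℝ} (hε : 0 < ε) :
    ∃ x ∈ S, ∀ y ∈ T, sSup ((fun x => sInf (f x '' T)) '' S) - ε ≤ f x y := by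
  obtain ⟨_, ⟨x, hxS, rfl⟩, hx⟩ :=
    exists_lt_of_lt_csSup (hS.image _) (sub_lt_self (sSup ((fun x => sInf (f x '' T)) '' S)) hε)
  exact ⟨x, hxS, fun y hy => hx.le.trans (csInf_le (hbdd x hxS) (mem_image_of_mem _ hy))⟩

theorem exists_forall_le_sInf_sSup_add (f : ι → κ → ℝ) (hT : T.Nonempty)
    (hbdd : ∀ y ∈ T, BddAbove ((fun x => f x y) '' S)) {ε : ℝ} (hε : 0 < ε) :
    ∃ y ∈ T, ∀ x ∈ S, f x y ≤ sInf ((fun y => sSup ((fun x => f x y) '' S)) '' T) + ε := by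
  obtain ⟨_, ⟨y, hyT, rfl⟩, hy⟩ :=
    exists_lt_of_csInf_lt (hT.image _)
      (lt_add_of_pos_right (sInf ((fun y => sSup ((fun x => f x y) '' S)) '' T)) hε)
  exact ⟨y, hyT, fun x hx => (le_csSup (hbdd y hyT) (mem_image_of_mem _ hx)).trans hy.le⟩

end SaddleValue

section ConicGame

variable {E F : Type*} [NormedAddCommGroup E] [NormedSpace ℝ E]
  [NormedAddCommGroup F] [NormedSpace ℝ F]

theorem exists_mem_inter_level_forall_nonneg
    (hE : Function.Surjective (inclusionInDoubleDual ℝ E)) {C : Set E} (hCconv : Convex ℝ C) (hCclosed : IsClosed C) {α : StrongDual ℝ E}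
    (hα : α ∈ interior {w : StrongDual ℝ E | ∀ x ∈ C, 0 ≤ w x})
    {K : Set F} (hKcone : ∀ r : ℝ, 0 ≤ r → ∀ y ∈ K, r • y ∈ K) {β : StrongDual ℝ F}
    (hβ : β ∈ interior {z : StrongDual ℝ F | ∀ y ∈ K, 0 ≤ z y}) (B : F →L[ℝ] StrongDual ℝ E)
    (happrox : ∀ ε > 0, ∃ x ∈ {x ∈ C | α x = 1}, ∀ y ∈ {y ∈ K | β y = 1}, -ε ≤ B y x) :
    ∃ x ∈ {x ∈ C | α x = 1}, ∀ y ∈ K, 0 ≤ B y x := by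
  obtain ⟨εα, hεα, hαC⟩ := exists_pos_mul_norm_le_of_mem_interior_dualCone hα
  obtain ⟨εβ, hεβ, hβK⟩ := exists_pos_mul_norm_le_of_mem_interior_dualCone hβ
  obtain ⟨x, hxS, hx⟩ := exists_forall_le_of_forall_sub_le hE (convex_inter_level hCconv α 1)
    (isClosed_inter_level hCclosed α 1) (isBounded_inter_level_of_mul_norm_le hεα hαC 1)
    (fun y : {y ∈ K | β y = 1} => B y) 0 fun ε hε => by
      obtain ⟨x, hxS, hx⟩ := happrox ε hε
      exact ⟨x, hxS, fun y => (zero_sub ε).symm ▸ hx y y.2⟩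
  exact ⟨x, hxS, fun y hy => nonneg_of_nonneg_on_inter_level_one (z := B.flip x) hKcone
    (fun y hy hy0 => pos_of_mul_norm_le hεβ hβK hy hy0) (fun y hyT => hx ⟨y, hyT⟩) hy⟩

theorem apply_nonneg_of_dual_feasible {C : Set E} {K : Set F} (A : E →L[ℝ] StrongDual ℝ F)
    {c : StrongDual ℝ E} {y₀ : F} (hy₀K : y₀ ∈ K) (hy₀ : ∀ x ∈ C, 0 ≤ (-(A.flip y₀) + c) x)
    {x : E} (hxC : x ∈ C) (hAx : ∀ y ∈ K, 0 ≤ A x y) : 0 ≤ c x := by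
  have h₁ := hy₀ x hxC
  have h₂ := hAx y₀ hy₀K
  simp only [add_apply, neg_apply, ContinuousLinearMap.flip_apply] at h₁
  linarith

theorem apply_nonpos_of_primal_feasible {C : Set E} {K : Set F} (A : E →L[ℝ] StrongDual ℝ F)
    {b : StrongDual ℝ F} {x₀ : E} (hx₀C : x₀ ∈ C) (hx₀ : ∀ y ∈ K, 0 ≤ (A x₀ - b) y)
    {y : F} (hyK : y ∈ K) (hAy : ∀ x ∈ C, 0 ≤ (-(A.flip y)) x) : b y ≤ 0 := by
  have h₁ := hx₀ y hyK
  have h₂ := hAy x₀ hx₀C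
  simp only [sub_apply, neg_apply, ContinuousLinearMap.flip_apply] at h₁ h₂
  linarith

end ConicGame

theorem stmt14_general
    {X Y : Type*} [NormedAddCommGroup X] [NormedSpace ℝ X]
    [NormedAddCommGroup Y] [NormedSpace ℝ Y]
    -- reflexivity of X and Y
    (hXrefl : Function.Surjective (NormedSpace.inclusionInDoubleDual ℝ X))
    (hYrefl : Function.Surjective (NormedSpace.inclusionInDoubleDual ℝ Y))
    (A : X →L[ℝ] (Y →L[ℝ] ℝ))
    -- closed convex cones C, K with solid dual cones
    (C : Set X) (K : Set Y)
    (hCcone : ∀ (r : ℝ), 0 ≤ r → ∀ x ∈ C, r • x ∈ C) (hCconv : Convex ℝ C)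
    (hCclosed : IsClosed C)
    (hKcone : ∀ (r : ℝ), 0 ≤ r → ∀ y ∈ K, r • y ∈ K) (hKconv : Convex ℝ K)
    (hKclosed : IsClosed K)
    (Cstar : Set (X →L[ℝ] ℝ)) (hCstar : Cstar = {w : X →L[ℝ] ℝ | ∀ x ∈ C, 0 ≤ w x})
    (Kstar : Set (Y →L[ℝ] ℝ)) (hKstar : Kstar = {z : Y →L[ℝ] ℝ | ∀ y ∈ K, 0 ≤ z y})
    -- data of the programs and consistency
    (c : X →L[ℝ] ℝ) (b : Y →L[ℝ] ℝ)
    (FeasP : Set X) (hFeasP : FeasP = {x | x ∈ C ∧ A x - b ∈ Kstar})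
    (FeasD : Set Y) (hFeasD : FeasD = {y | y ∈ K ∧ -(A.flip y) + c ∈ Cstar})
    (hPne : FeasP.Nonempty) (hDne : FeasD.Nonempty)
    -- the game G = (α,β,A) with α ∈ int C*, β ∈ int K*
    (α : X →L[ℝ] ℝ) (hα : α ∈ interior Cstar)
    (β : Y →L[ℝ] ℝ) (hβ : β ∈ interior Kstar)
    (S : Set X) (hS : S = {x ∈ C | α x = 1})
    (T : Set Y) (hT : T = {y ∈ K | β y = 1})
    -- finite security levels (F3)
    (hSne : S.Nonempty) (hTne : T.Nonempty)
    (hbb : ∀ x ∈ S, BddBelow ((fun y => A x y) '' T))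
    (hba' : ∀ y ∈ T, BddAbove ((fun x => A x y) '' S))
    -- v is the value of the game
    (v : ℝ)
    (hv : v = sSup ((fun x => sInf ((fun y => A x y) '' T)) '' S))
    (hv' : v = sInf ((fun y => sSup ((fun x => A x y) '' S)) '' T))
    -- hypothesis: the game value is 0
    (hv0 : v = 0) :
    (S ∩ {x : X | A x ∈ Kstar}).Nonempty ∧
    (T ∩ {y : Y | -(A.flip y) ∈ Cstar}).Nonempty ∧
    (∀ x ∈ S, A x ∈ Kstar → 0 ≤ c x) ∧
    (∀ y ∈ T, -(A.flip y) ∈ Cstar → b y ≤ 0) := by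
  have hSval : sSup ((fun x => sInf ((fun y => A x y) '' T)) '' S) = 0 := hv ▸ hv0
  have hTval : sInf ((fun y => sSup ((fun x => A x y) '' S)) '' T) = 0 := hv' ▸ hv0
  subst hS hT hCstar hKstar hFeasP hFeasD
  obtain ⟨x, hxS, hx⟩ := exists_mem_inter_level_forall_nonneg hXrefl hCconv hCclosed hα hKcone hβ
    A.flip fun ε hε => by
      obtain ⟨x, hxS, hx⟩ := exists_forall_sSup_sInf_sub_le (fun x y => A x y) hSne hbb hε
      refine ⟨x, hxS, fun y hyT => ?_⟩
      have := hx y hyT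
      rw [hSval, zero_sub] at this
      exact this
  obtain ⟨y, hyT, hy⟩ := exists_mem_inter_level_forall_nonneg hYrefl hKconv hKclosed hβ hCcone hα
    (-A) fun ε hε => by
      obtain ⟨y, hyT, hy⟩ := exists_forall_le_sInf_sSup_add (fun x y => A x y) hTne hba' hε
      refine ⟨y, hyT, fun x hxS => ?_⟩
      have := hy x hxS
      rw [hTval, zero_add] at this
      simp only [neg_apply]
      linarith
  obtain ⟨x₀, hx₀C, hx₀⟩ := hPne
  obtain ⟨y₀, hy₀K, hy₀⟩ := hDne
  exact ⟨⟨x, hxS, hx⟩, ⟨y, hyT, hy⟩,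
    fun x hxS hAx => apply_nonneg_of_dual_feasible A hy₀K hy₀ hxS.1 hAx,
    fun y hyT hAy => apply_nonpos_of_primal_feasible A hx₀C hx₀ hyT.1 hAy⟩

/-- if {(P),(D)} is consistent and the game G = (α,β,A) has value v = 0,
then S ∩ {x : Ax ∈ K*} and T ∩ {y : −A*y ∈ C*} are nonempty; moreover every x ∈ S with
Ax ∈ K* satisfies ⟨c,x⟩ ≥ 0, and every y ∈ T with −A*y ∈ C* satisfies ⟨y,b⟩ ≤ 0. -/
theorem stmt14
    {X Y : Type*} [NormedAddCommGroup X] [NormedSpace ℝ X] [CompleteSpace X]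
    [NormedAddCommGroup Y] [NormedSpace ℝ Y] [CompleteSpace Y]
    -- reflexivity of X and Y
    (hXrefl : Function.Surjective (NormedSpace.inclusionInDoubleDual ℝ X))
    (hYrefl : Function.Surjective (NormedSpace.inclusionInDoubleDual ℝ Y))
    (A : X →L[ℝ] (Y →L[ℝ] ℝ))
    -- closed convex cones C, K with solid dual cones
    (C : Set X) (K : Set Y)
    (hCcone : ∀ (r : ℝ), 0 ≤ r → ∀ x ∈ C, r • x ∈ C) (hCconv : Convex ℝ C)
    (hCclosed : IsClosed C)
    (hKcone : ∀ (r : ℝ), 0 ≤ r → ∀ y ∈ K, r • y ∈ K) (hKconv : Convex ℝ K)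
    (hKclosed : IsClosed K)
    (Cstar : Set (X →L[ℝ] ℝ)) (hCstar : Cstar = {w : X →L[ℝ] ℝ | ∀ x ∈ C, 0 ≤ w x})
    (Kstar : Set (Y →L[ℝ] ℝ)) (hKstar : Kstar = {z : Y →L[ℝ] ℝ | ∀ y ∈ K, 0 ≤ z y})
    -- data of the programs and consistency
    (c : X →L[ℝ] ℝ) (b : Y →L[ℝ] ℝ)
    (FeasP : Set X) (hFeasP : FeasP = {x | x ∈ C ∧ A x - b ∈ Kstar})
    (FeasD : Set Y) (hFeasD : FeasD = {y | y ∈ K ∧ -(A.flip y) + c ∈ Cstar})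
    (hPne : FeasP.Nonempty) (hDne : FeasD.Nonempty)
    -- the game G = (α,β,A) with α ∈ int C*, β ∈ int K*
    (α : X →L[ℝ] ℝ) (hα : α ∈ interior Cstar)
    (β : Y →L[ℝ] ℝ) (hβ : β ∈ interior Kstar)
    (S : Set X) (hS : S = {x ∈ C | α x = 1})
    (T : Set Y) (hT : T = {y ∈ K | β y = 1})
    -- finite security levels (F3)
    (hSne : S.Nonempty) (hTne : T.Nonempty)
    (hbb : ∀ x ∈ S, BddBelow ((fun y => A x y) '' T))
    (hba : BddAbove ((fun x => sInf ((fun y => A x y) '' T)) '' S))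
    (hba' : ∀ y ∈ T, BddAbove ((fun x => A x y) '' S))
    (hbb' : BddBelow ((fun y => sSup ((fun x => A x y) '' S)) '' T))
    -- v is the value of the game
    (v : ℝ)
    (hv : v = sSup ((fun x => sInf ((fun y => A x y) '' T)) '' S))
    (hv' : v = sInf ((fun y => sSup ((fun x => A x y) '' S)) '' T))
    -- hypothesis: the game value is 0
    (hv0 : v = 0) :
    (S ∩ {x : X | A x ∈ Kstar}).Nonempty ∧
    (T ∩ {y : Y | -(A.flip y) ∈ Cstar}).Nonempty ∧
    (∀ x ∈ S, A x ∈ Kstar → 0 ≤ c x) ∧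
    (∀ y ∈ T, -(A.flip y) ∈ Cstar → b y ≤ 0) :=
  stmt14_general hXrefl hYrefl A C K hCcone hCconv hCclosed hKcone hKconv hKclosed Cstar hCstar
    Kstar hKstar c b FeasP hFeasP FeasD hFeasD hPne hDne α hα β hβ S hS T hT hSne hTne hbb hba' v hv
    hv' hv0
end
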